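/- arXiv:math/0506579 — 12 statements merged into one kernel-verified Lean document; each statement's English description precedes it below -/
import Mathlib

section
/- Let q be a Lie algebra over a field of characteristic zero and x ∈ q. Assume q is the direct sum of the subspaces [q,x] and z_q(x), i.e. [q,x] + z_q(x) = q and [q,x] ∩ z_q(x) = {0}. Then the normalizer of the centralizer z_q(x) in q equals z_q(x): n_q(z_q(x)) = z_q(x). -/
theorem LinearMap.apply_eq_zero_of_range_inf_ker_eq_bot {R M : Type*} [Semiring R]
    [AddCommMonoid M] [Module R M] {f : M →ₗ[R] M} (h : range f ⊓ ker f = ⊥) {y : M}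
    (hy : f (f y) = 0) : f y = 0 := by
  have hmem : f y ∈ range f ⊓ ker f := ⟨mem_range_self f y, hy⟩
  rwa [h, Submodule.mem_bot] at hmem

theorem lie_lie_eq_zero_of_lie_eq_zero {L : Type*} [LieRing L] {x y z : L} (hxy : ⁅x, y⁆ = 0)
    (hxz : ⁅x, z⁆ = 0) : ⁅x, ⁅y, z⁆⁆ = 0 := by
  rw [leibniz_lie, hxy, hxz, zero_lie, lie_zero, add_zero]

theorem normalizer_of_centralizer_eq_centralizer_general
    {k L : Type*} [Field k] [LieRing L] [LieAlgebra k L] (x : L)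
    (hint : LinearMap.range (LieAlgebra.ad k L x) ⊓ LinearMap.ker (LieAlgebra.ad k L x) = ⊥) :
    {y : L | ∀ z : L, ⁅x, z⁆ = 0 → ⁅x, ⁅y, z⁆⁆ = 0} = {y : L | ⁅x, y⁆ = 0} := by
  ext y
  constructor
  · intro hy
    -- `x` centralises itself, so `⁅y, x⁆ = -⁅x, y⁆` lies in the centraliser.
    have hxxy : ⁅x, ⁅x, y⁆⁆ = 0 := by
      simpa only [← lie_skew x y, lie_neg, neg_eq_zero] using hy x (lie_self x)
    exact LinearMap.apply_eq_zero_of_range_inf_ker_eq_bot hint hxxy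
  · exact fun hxy z hxz => lie_lie_eq_zero_of_lie_eq_zero hxy hxz

/-- Let `q` be a Lie algebra over a field of characteristic zero and
`x ∈ q`. Assume `q = [q,x] ⊕ z_q(x)` as subspaces (here `[q,x]` is the image of `ad x`
and `z_q(x) = ker (ad x)` is the centraliser of `x`). Then the normaliser of `z_q(x)`
in `q` equals `z_q(x)`. -/
theorem normalizer_of_centralizer_eq_centralizer
    {k L : Type*} [Field k] [CharZero k] [LieRing L] [LieAlgebra k L] (x : L)
    (hsum : LinearMap.range (LieAlgebra.ad k L x) ⊔ LinearMap.ker (LieAlgebra.ad k L x) = ⊤)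
    (hint : LinearMap.range (LieAlgebra.ad k L x) ⊓ LinearMap.ker (LieAlgebra.ad k L x) = ⊥) :
    {y : L | ∀ z : L, ⁅x, z⁆ = 0 → ⁅x, ⁅y, z⁆⁆ = 0} = {y : L | ⁅x, y⁆ = 0} :=
  normalizer_of_centralizer_eq_centralizer_general x hint
end

section
/- Let q be a Lie algebra over a field of characteristic zero and x ∈ q. Assume that the centralizer z_q(x) is abelian and that q = [q,x] ⊕ z_q(x) (direct sum of subspaces). Then z_q(x) is a Cartan subalgebra of q, i.e. z_q(x) is a nilpotent Lie subalgebra equal to its own normalizer in q. -/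
/-- The centraliser of an element `x` of a Lie algebra, as a Lie subalgebra:
`z_q(x) = {y : ⁅x, y⁆ = 0}`. -/
def elementCentralizer (k : Type*) {L : Type*} [Field k] [LieRing L] [LieAlgebra k L]
    (x : L) : LieSubalgebra k L where
  carrier := {y : L | ⁅x, y⁆ = 0}
  add_mem' := by intro a b ha hb; simp only [Set.mem_setOf_eq] at *; rw [lie_add, ha, hb, add_zero]
  zero_mem' := by simp
  smul_mem' := by intro c a ha; simp only [Set.mem_setOf_eq] at *; rw [lie_smul, ha, smul_zero]
  lie_mem' := by
    intro a b ha hb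
    simp only [Set.mem_setOf_eq] at *
    rw [leibniz_lie, ha, hb, zero_lie, lie_zero, add_zero]

/-- Let `q` be a Lie algebra over a field of characteristic zero and
`x ∈ q`. Assume the centraliser `z_q(x)` is abelian and `q = [q,x] ⊕ z_q(x)` as
subspaces. Then `z_q(x)` is a Cartan subalgebra of `q`, i.e. it is nilpotent and
self-normalising. -/
theorem centralizer_isCartanSubalgebra
    {k L : Type*} [Field k] [CharZero k] [LieRing L] [LieAlgebra k L] (x : L)
    (hab : ∀ y z : L, ⁅x, y⁆ = 0 → ⁅x, z⁆ = 0 → ⁅y, z⁆ = 0)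
    (hsum : LinearMap.range (LieAlgebra.ad k L x) ⊔ LinearMap.ker (LieAlgebra.ad k L x) = ⊤)
    (hint : LinearMap.range (LieAlgebra.ad k L x) ⊓ LinearMap.ker (LieAlgebra.ad k L x) = ⊥) :
    (elementCentralizer k x).IsCartanSubalgebra := by
  have hmem : ∀ y : L, y ∈ elementCentralizer k x ↔ ⁅x, y⁆ = 0 := fun y => Iff.rfl
  have habelian : IsLieAbelian (elementCentralizer k x) := by
    constructor
    rintro ⟨a, ha⟩ ⟨b, hb⟩
    ext
    exact hab a b ha hb
  constructor
  · exact (inferInstance : LieRing.IsNilpotent (elementCentralizer k x))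
  · apply le_antisymm _ (elementCentralizer k x).le_normalizer
    intro y hy
    rw [LieSubalgebra.mem_normalizer_iff] at hy
    have hx : x ∈ elementCentralizer k x := by rw [hmem]; exact lie_self x
    have h1 : ⁅x, y⁆ ∈ LinearMap.range (LieAlgebra.ad k L x) := ⟨y, rfl⟩
    have h2 : ⁅x, y⁆ ∈ LinearMap.ker (LieAlgebra.ad k L x) := by
      have := hy x hx
      rw [hmem] at this
      simp only [LinearMap.mem_ker, LieAlgebra.ad_apply]
      have h3 : -⁅y, x⁆ = ⁅x, y⁆ := lie_skew x y
      rw [← h3, lie_neg, this, neg_zero]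
    have : ⁅x, y⁆ ∈ LinearMap.range (LieAlgebra.ad k L x) ⊓
        LinearMap.ker (LieAlgebra.ad k L x) := ⟨h1, h2⟩
    rw [hint, Submodule.mem_bot] at this
    exact this
end

section
/- Let q be a finite-dimensional Lie algebra over an algebraically closed field of characteristic zero. Then the following are equivalent: (a) there exists x ∈ q such that z_q(x) is abelian and q = [q,x] ⊕ z_q(x) (direct sum of subspaces); (b) some Cartan subalgebra of q is abelian. -/
open LieAlgebra LieModule Module

/-- Over an infinite field, finitely many nonzero linear functionals admit a common
non-vanishing point. -/
lemma aux_exists_forall_ne_zero {k V : Type*} [Field k] [Infinite k] [AddCommGroup V]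
    [Module k V] (s : Finset (V →ₗ[k] k)) (hs : ∀ f ∈ s, f ≠ 0) :
    ∃ v : V, ∀ f ∈ s, f v ≠ 0 := by
  classical
  induction s using Finset.induction_on with
  | empty => exact ⟨0, by simp⟩
  | @insert g s hg ih =>
    obtain ⟨v, hv⟩ := ih (fun f hf => hs f (Finset.mem_insert_of_mem hf))
    have hgne : g ≠ 0 := hs g (Finset.mem_insert_self g s)
    obtain ⟨w, hw⟩ : ∃ w, g w ≠ 0 := by
      by_contra h
      push_neg at h
      exact hgne (LinearMap.ext fun w => by simp [h w])
    have hkey : ∀ f ∈ insert g s, f w ≠ 0 ∨ f v ≠ 0 := by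
      intro f hf
      rcases Finset.mem_insert.mp hf with rfl | hf
      · exact Or.inl hw
      · exact Or.inr (hv f hf)
    have hB : (⋃ f ∈ (insert g s : Finset (V →ₗ[k] k)),
        {t : k | f v + t * f w = 0}).Finite := by
      refine Set.Finite.biUnion (Finset.finite_toSet _) ?_
      intro f hf
      rcases eq_or_ne (f w) 0 with h0 | h0
      · have hfv : f v ≠ 0 := by
          rcases hkey f hf with hfw | hfv
          · exact absurd h0 hfw
          · exact hfv
        refine Set.Finite.subset (Set.finite_empty) ?_
        intro t ht
        simp only [Set.mem_setOf_eq, h0, mul_zero, add_zero] at ht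
        exact absurd ht hfv
      · refine Set.Finite.subset (Set.finite_singleton (-(f v) / f w)) ?_
        intro t ht
        have ht' : t * f w = -(f v) := by
          have h : f v + t * f w = 0 := ht
          linear_combination h
        rw [Set.mem_singleton_iff, eq_div_iff h0]
        exact ht'
    obtain ⟨t, ht⟩ := hB.infinite_compl.nonempty
    refine ⟨v + t • w, ?_⟩
    intro f hf
    intro h0
    apply ht
    refine Set.mem_biUnion hf ?_
    simp only [Set.mem_setOf_eq]
    simpa [map_add, map_smul, smul_eq_mul] using h0

/-- Let `q` be a finite-dimensional Lie algebra over an algebraically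
closed field of characteristic zero. Then the following are equivalent:
(a) there exists `x ∈ q` such that `z_q(x)` is abelian and `q = [q,x] ⊕ z_q(x)`
(i.e. `q` has a generic centraliser);
(b) some Cartan subalgebra of `q` is abelian. -/
theorem exists_generic_centralizer_iff_exists_abelian_cartan
    {k L : Type*} [Field k] [CharZero k] [IsAlgClosed k] [LieRing L] [LieAlgebra k L]
    [FiniteDimensional k L] :
    (∃ x : L, (∀ y z : L, ⁅x, y⁆ = 0 → ⁅x, z⁆ = 0 → ⁅y, z⁆ = 0) ∧
        LinearMap.range (LieAlgebra.ad k L x) ⊔ LinearMap.ker (LieAlgebra.ad k L x) = ⊤ ∧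
        LinearMap.range (LieAlgebra.ad k L x) ⊓ LinearMap.ker (LieAlgebra.ad k L x) = ⊥) ↔
      (∃ H : LieSubalgebra k L, H.IsCartanSubalgebra ∧ IsLieAbelian H) := by
  classical
  constructor
  · rintro ⟨x, hab, hsup, hinf⟩
    -- the Engel subalgebra of `x` equals the centralizer of `x`
    have hstep : ∀ n : ℕ, ∀ y : L, ((ad k L x) ^ n) y = 0 → ⁅x, y⁆ = 0 := by
      intro n
      induction n with
      | zero => intro y hy; simp only [pow_zero, Module.End.one_apply] at hy; simp [hy]
      | succ n ih =>
        intro y hy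
        rw [pow_succ, Module.End.mul_apply] at hy
        have h1 : ⁅x, ⁅x, y⁆⁆ = 0 := ih _ (by simpa using hy)
        have h2 : ⁅x, y⁆ ∈ LinearMap.range (ad k L x) ⊓ LinearMap.ker (ad k L x) := by
          refine ⟨⟨y, rfl⟩, ?_⟩
          simpa [ad_apply] using h1
        rw [hinf] at h2
        simpa using h2
    have hker : ∀ y : L, y ∈ LieSubalgebra.engel k x ↔ ⁅x, y⁆ = 0 := by
      intro y
      rw [LieSubalgebra.mem_engel_iff]
      constructor
      · rintro ⟨n, hn⟩; exact hstep n y hn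
      · intro hy; exact ⟨1, by simpa [ad_apply] using hy⟩
    have habl : IsLieAbelian (LieSubalgebra.engel k x) := by
      constructor
      intro a b
      have h1 : ⁅x, (a : L)⁆ = 0 := (hker _).mp a.2
      have h2 : ⁅x, (b : L)⁆ = 0 := (hker _).mp b.2
      have h3 : ⁅(a : L), (b : L)⁆ = 0 := hab _ _ h1 h2
      exact Subtype.ext (by simpa using h3)
    haveI := habl
    refine ⟨LieSubalgebra.engel k x, ⟨inferInstance, LieSubalgebra.normalizer_engel k x⟩, habl⟩
  · rintro ⟨H, hH, habl⟩
    haveI := hH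
    haveI : Fintype (Weight k H L) := Fintype.ofFinite _
    -- choose an element of `H` on which all nonzero weights are nonzero
    obtain ⟨x', hx'⟩ : ∃ x' : H, ∀ χ : Weight k H L, χ.IsNonZero → χ x' ≠ 0 := by
      have hfin : ({f : H →ₗ[k] k |
          ∃ χ : Weight k H L, χ.IsNonZero ∧ (χ : H →ₗ[k] k) = f}).Finite := by
        apply Set.Finite.subset (Set.finite_range (fun χ : Weight k H L => (χ : H →ₗ[k] k)))
        rintro f ⟨χ, -, rfl⟩
        exact ⟨χ, rfl⟩
      obtain ⟨v, hv⟩ := aux_exists_forall_ne_zero hfin.toFinset (by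
        intro f hf
        rw [Set.Finite.mem_toFinset] at hf
        obtain ⟨χ, hχ, rfl⟩ := hf
        exact Weight.coe_toLinear_ne_zero_iff.mpr hχ)
      refine ⟨v, fun χ hχ => ?_⟩
      have hmem : (χ : H →ₗ[k] k) ∈ hfin.toFinset := by
        rw [Set.Finite.mem_toFinset]
        exact ⟨χ, hχ, rfl⟩
      simpa using hv _ hmem
    set x : L := (x' : L) with hx_def
    -- `H` is contained in the centralizer of `x`
    have hHker : H.toSubmodule ≤ LinearMap.ker (ad k L x) := by
      intro y hy
      have h1 : ⁅x', (⟨y, hy⟩ : H)⁆ = 0 := trivial_lie_zero _ _ _ _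
      have h2 : ⁅x, y⁆ = 0 := by
        calc ⁅x, y⁆ = ((⁅x', (⟨y, hy⟩ : H)⁆ : H) : L) := by
              rw [LieSubalgebra.coe_bracket]
          _ = ((0 : H) : L) := by rw [h1]
          _ = 0 := rfl
      simpa [ad_apply] using h2
    -- every nonzero root space lies in the range of `ad x`
    have hroot : ∀ χ : Weight k H L, χ.IsNonZero →
        (genWeightSpace L (χ : H → k) : Submodule k L) ≤ LinearMap.range (ad k L x) := by
      intro χ hχ m hm
      have hc : χ x' ≠ 0 := hx' χ hχ
      set W := genWeightSpace L (χ : H → k) with hW_def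
      have hnil : IsNilpotent (toEnd k H W x' - algebraMap k _ (χ x')) :=
        isNilpotent_toEnd_sub_algebraMap L (χ : H → k) x'
      have hunit : IsUnit (toEnd k H W x') := by
        have h1 : IsUnit (algebraMap k (Module.End k W) (χ x')) :=
          (hc.isUnit).map (algebraMap k (Module.End k W))
        have h2 := hnil.isUnit_add_left_of_commute h1
          (Algebra.commute_algebraMap_right _ _)
        simpa [sub_add_cancel] using h2
      obtain ⟨n, hn⟩ := ((Module.End.isUnit_iff _).mp hunit).2 ⟨m, hm⟩
      refine ⟨(n : L), ?_⟩
      have := congrArg (Subtype.val) hn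
      simpa [toEnd_apply_apply, ad_apply, LieSubalgebra.coe_bracket_of_module] using this
    -- the weight space decomposition
    have hdecomp : (⊤ : Submodule k L) = ⨆ χ : H → k, (genWeightSpace L χ : Submodule k L) := by
    -- coe of the LieSubmodule-level statement
      have htop := iSup_genWeightSpace_eq_top k H L
      have := congrArg (fun N : LieSubmodule k H L => (N : Submodule k L)) htop
      simpa [LieSubmodule.iSup_toSubmodule] using this.symm
    have hwt : ∀ χ : H → k, (genWeightSpace L χ : Submodule k L) ≤
        (⨆ (w : Weight k H L) (_ : w.IsNonZero), (genWeightSpace L (w : H → k) :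
          Submodule k L)) ⊔ H.toSubmodule := by
      intro χ
      by_cases hbot : genWeightSpace L χ = ⊥
      · simp [hbot]
      · set w : Weight k H L := ⟨χ, hbot⟩ with hw_def
        by_cases hz : w.IsZero
        · have hzero : χ = 0 := hz
          have : genWeightSpace L χ = H.toLieSubmodule := by
            rw [hzero]
            exact rootSpace_zero_eq k L H
          rw [this]
          exact le_sup_of_le_right (by rw [LieSubalgebra.coe_toLieSubmodule])
        · refine le_sup_of_le_left ?_
          have : (genWeightSpace L χ : Submodule k L) =
              (genWeightSpace L (w : H → k) : Submodule k L) := rfl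
          rw [this]
          exact le_iSup_of_le w (le_iSup_of_le hz le_rfl)
    set R : Submodule k L :=
      ⨆ (w : Weight k H L) (_ : w.IsNonZero), (genWeightSpace L (w : H → k) : Submodule k L)
      with hR_def
    have hR_le : R ≤ LinearMap.range (ad k L x) :=
      iSup_le fun w => iSup_le fun hw => hroot w hw
    have hRH : R ⊔ H.toSubmodule = ⊤ := by
      rw [eq_top_iff, hdecomp]
      exact iSup_le hwt
    -- `range ⊔ ker = ⊤`
    have hsup : LinearMap.range (ad k L x) ⊔ LinearMap.ker (ad k L x) = ⊤ := by
      rw [eq_top_iff, ← hRH]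
      exact sup_le (le_sup_of_le_left hR_le) (le_sup_of_le_right hHker)
    -- rank-nullity gives `range ⊓ ker = ⊥`
    have hrn := LinearMap.finrank_range_add_finrank_ker (ad k L x)
    have h2 := Submodule.finrank_sup_add_finrank_inf_eq
      (LinearMap.range (ad k L x)) (LinearMap.ker (ad k L x))
    rw [hsup, finrank_top] at h2
    have hinf : LinearMap.range (ad k L x) ⊓ LinearMap.ker (ad k L x) = ⊥ := by
      have h0 : finrank k ↥(LinearMap.range (ad k L x) ⊓ LinearMap.ker (ad k L x)) = 0 := by
        omega
      exact Submodule.finrank_eq_zero.mp h0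
    -- the centralizer of `x` equals `H`
    have hdim1 : finrank k L ≤ finrank k R + finrank k H.toSubmodule := by
      have := Submodule.finrank_sup_add_finrank_inf_eq R H.toSubmodule
      rw [hRH, finrank_top] at this
      omega
    have hdim2 : finrank k R ≤ finrank k ↥(LinearMap.range (ad k L x)) :=
      Submodule.finrank_mono hR_le
    have hdim3 : finrank k ↥(LinearMap.ker (ad k L x)) ≤ finrank k H.toSubmodule := by
      omega
    have hker_eq : H.toSubmodule = LinearMap.ker (ad k L x) :=
      Submodule.eq_of_le_of_finrank_le hHker hdim3
    refine ⟨x, ?_, hsup, hinf⟩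
    intro y z hy hz
    have hyH : y ∈ H := by
      have : y ∈ LinearMap.ker (ad k L x) := by simpa [ad_apply] using hy
      rw [← hker_eq] at this
      exact this
    have hzH : z ∈ H := by
      have : z ∈ LinearMap.ker (ad k L x) := by simpa [ad_apply] using hz
      rw [← hker_eq] at this
      exact this
    have h1 : ⁅(⟨y, hyH⟩ : H), (⟨z, hzH⟩ : H)⁆ = 0 := trivial_lie_zero _ _ _ _
    calc ⁅y, z⁆ = ((⁅(⟨y, hyH⟩ : H), (⟨z, hzH⟩ : H)⁆ : H) : L) := by
          rw [LieSubalgebra.coe_bracket]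
      _ = ((0 : H) : L) := by rw [h1]
      _ = 0 := rfl
end

section
/- Let q be a Lie algebra over a field of characteristic zero and x ∈ q. Assume that z_q(x) is abelian and q = [q,x] ⊕ z_q(x) (direct sum of subspaces). Then the subspace [q, z_q(x)] spanned by all brackets [y,z] with y ∈ q and z ∈ z_q(x) equals [q,x]. -/
/-! Write `y = ⁅x, u⁆ + c` with `c` centralizing `x`. For `z` centralizing `x`, abelianness kills
`⁅c, z⁆`, and the Jacobi identity turns `⁅⁅x, u⁆, z⁆` into `⁅x, ⁅u, z⁆⁆`, so `[q, z_q(x)] ⊆ [q, x]`.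
The reverse inclusion holds because `x` itself lies in `z_q(x)`. -/

namespace LieAlgebra

variable {R L : Type*} [CommRing R] [LieRing L] [LieAlgebra R L]

lemma lie_lie_eq_of_lie_eq_zero {x z : L} (hz : ⁅x, z⁆ = 0) (u : L) :
    ⁅⁅x, u⁆, z⁆ = ⁅x, ⁅u, z⁆⁆ := by
  rw [lie_lie, hz, lie_zero, sub_zero]

lemma lie_mem_range_ad_of_lie_eq_zero {x z : L} (hz : ⁅x, z⁆ = 0)
    (hcomm : ∀ c : L, ⁅x, c⁆ = 0 → ⁅c, z⁆ = 0)
    (hsum : LinearMap.range (ad R L x) ⊔ LinearMap.ker (ad R L x) = ⊤) (y : L) :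
    ⁅y, z⁆ ∈ LinearMap.range (ad R L x) := by
  obtain ⟨_, ⟨u, rfl⟩, c, hc, rfl⟩ := Submodule.mem_sup.mp (hsum ▸ Submodule.mem_top (x := y))
  refine ⟨⁅u, z⁆, ?_⟩
  rw [add_lie, hcomm c hc, add_zero, ad_apply, ad_apply, lie_lie_eq_of_lie_eq_zero hz]

end LieAlgebra

theorem span_brackets_centralizer_eq_range_ad_general
    {k L : Type*} [Field k] [LieRing L] [LieAlgebra k L] (x : L)
    (hab : ∀ y z : L, ⁅x, y⁆ = 0 → ⁅x, z⁆ = 0 → ⁅y, z⁆ = 0)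
    (hsum : LinearMap.range (LieAlgebra.ad k L x) ⊔ LinearMap.ker (LieAlgebra.ad k L x) = ⊤) :
    Submodule.span k {w : L | ∃ y z : L, ⁅x, z⁆ = 0 ∧ ⁅y, z⁆ = w} =
      LinearMap.range (LieAlgebra.ad k L x) := by
  apply le_antisymm
  · rw [Submodule.span_le]
    rintro _ ⟨y, z, hz, rfl⟩
    exact LieAlgebra.lie_mem_range_ad_of_lie_eq_zero hz (fun c hc => hab c z hc hz) hsum y
  · rintro _ ⟨y, rfl⟩
    exact Submodule.subset_span ⟨-y, x, lie_self x, by rw [LieAlgebra.ad_apply, neg_lie, lie_skew]⟩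

/-- Let `q` be a Lie algebra over a field of characteristic zero and
`x ∈ q`. Assume `z_q(x)` is abelian and `q = [q,x] ⊕ z_q(x)` as subspaces. Then the
subspace `[q, z_q(x)]` spanned by all brackets `⁅y, z⁆` with `y ∈ q`, `z ∈ z_q(x)`
equals `[q,x]` (the image of `ad x`). -/
theorem span_brackets_centralizer_eq_range_ad
    {k L : Type*} [Field k] [CharZero k] [LieRing L] [LieAlgebra k L] (x : L)
    (hab : ∀ y z : L, ⁅x, y⁆ = 0 → ⁅x, z⁆ = 0 → ⁅y, z⁆ = 0)
    (hsum : LinearMap.range (LieAlgebra.ad k L x) ⊔ LinearMap.ker (LieAlgebra.ad k L x) = ⊤)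
    (hint : LinearMap.range (LieAlgebra.ad k L x) ⊓ LinearMap.ker (LieAlgebra.ad k L x) = ⊥) :
    Submodule.span k {w : L | ∃ y z : L, ⁅x, z⁆ = 0 ∧ ⁅y, z⁆ = w} =
      LinearMap.range (LieAlgebra.ad k L x) :=
  span_brackets_centralizer_eq_range_ad_general x hab hsum
end

section
/- Let q be a finite-dimensional Lie algebra over a field of characteristic zero and x ∈ q. Assume that z_q(x) is abelian and q = [q,x] ⊕ z_q(x) (direct sum of subspaces). Then the dual space q* decomposes as the direct sum q* = (x·q*) ⊕ (q*)^x of the image of the coadjoint action of x and the fixed-point space of x; moreover (q*)^x = (q*)^{z_q(x)}. -/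
/-- The coadjoint action of `x : L` on the dual space: `(coad k x f) y = - f ⁅x, y⁆`. -/
noncomputable def coad (k : Type*) {L : Type*} [Field k] [LieRing L] [LieAlgebra k L]
    (x : L) : Module.Dual k L →ₗ[k] Module.Dual k L where
  toFun f := -(f ∘ₗ (LieAlgebra.ad k L x : L →ₗ[k] L))
  map_add' f g := by ext y; simp [add_comm]
  map_smul' c f := by ext y; simp

/-- For `ξ` in the dual space, the linear map `z ↦ z · ξ` (coadjoint action on `ξ`);
its range is the tangent space `q·ξ` of the coadjoint orbit and its kernel is the
stabiliser `q_ξ`. -/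
noncomputable def coadOrbitMap (k : Type*) {L : Type*} [Field k] [LieRing L] [LieAlgebra k L]
    (ξ : Module.Dual k L) : L →ₗ[k] Module.Dual k L where
  toFun z := coad k z ξ
  map_add' z w := by ext y; simp [coad, add_comm]
  map_smul' c z := by ext y; simp [coad]

/-
The coadjoint action of `x` is minus the transpose of `ad x`, so its image and kernel are the
annihilators of `z_q(x) = ker (ad x)` and `[q,x] = range (ad x)`; annihilators of complementary
subspaces are complementary. For the second claim, every `z ∈ z_q(x)` maps `q` into
`[q,x]`: it kills `z_q(x)` because the centralizer is abelian, and `⁅z, ⁅x, w⁆⁆ = ⁅x, ⁅z, w⁆⁆`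
by Jacobi. Hence a form vanishing on `[q,x]` is fixed by all of `z_q(x)`.
-/

section Coadjoint

variable {k L : Type*} [Field k] [LieRing L] [LieAlgebra k L]

open LinearMap

theorem coad_eq_neg_dualMap (x : L) : coad k x = -(LieAlgebra.ad k L x).dualMap := by
  ext f y
  simp [coad, dualMap_apply]

theorem coad_apply_eq_zero_iff (x : L) (f : Module.Dual k L) :
    coad k x f = 0 ↔ ∀ y, f ⁅x, y⁆ = 0 := by
  simp [coad, LinearMap.ext_iff]

theorem range_coad (x : L) :
    range (coad k x) = (ker (LieAlgebra.ad k L x)).dualAnnihilator := by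
  rw [coad_eq_neg_dualMap, range_neg, range_dualMap_eq_dualAnnihilator_ker]

theorem ker_coad (x : L) :
    ker (coad k x) = (range (LieAlgebra.ad k L x)).dualAnnihilator := by
  rw [coad_eq_neg_dualMap, ker_neg, ker_dualMap_eq_dualAnnihilator_range]

theorem isCompl_range_ker_coad {x : L}
    (h : IsCompl (range (LieAlgebra.ad k L x)) (ker (LieAlgebra.ad k L x))) :
    IsCompl (range (coad k x)) (ker (coad k x)) := by
  rw [range_coad, ker_coad]
  exact Subspace.isCompl_dualAnnihilator h.symm

theorem lie_mem_range_ad_of_lie_eq_zero {x z : L}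
    (hab : ∀ y z : L, ⁅x, y⁆ = 0 → ⁅x, z⁆ = 0 → ⁅y, z⁆ = 0)
    (hsum : range (LieAlgebra.ad k L x) ⊔ ker (LieAlgebra.ad k L x) = ⊤)
    (hz : ⁅x, z⁆ = 0) (y : L) : ⁅z, y⁆ ∈ range (LieAlgebra.ad k L x) := by
  obtain ⟨_, ⟨w, rfl⟩, c, hc, rfl⟩ :=
    Submodule.mem_sup.mp (hsum ▸ Submodule.mem_top (x := y))
  have hzc : ⁅z, c⁆ = 0 := hab z c hz hc
  have hzx : ⁅z, x⁆ = 0 := by rw [← lie_skew, hz, neg_zero]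
  refine ⟨⁅z, w⁆, ?_⟩
  simp only [LieAlgebra.ad_apply, lie_add, hzc, add_zero, leibniz_lie z x w, hzx, zero_lie,
    zero_add]

end Coadjoint

theorem dual_decomposition_of_generic_point_general
    {k L : Type*} [Field k] [LieRing L] [LieAlgebra k L]
    (x : L)
    (hab : ∀ y z : L, ⁅x, y⁆ = 0 → ⁅x, z⁆ = 0 → ⁅y, z⁆ = 0)
    (hsum : LinearMap.range (LieAlgebra.ad k L x) ⊔ LinearMap.ker (LieAlgebra.ad k L x) = ⊤)
    (hint : LinearMap.range (LieAlgebra.ad k L x) ⊓ LinearMap.ker (LieAlgebra.ad k L x) = ⊥) :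
    (LinearMap.range (coad k x) ⊔ LinearMap.ker (coad k x) = ⊤ ∧
      LinearMap.range (coad k x) ⊓ LinearMap.ker (coad k x) = ⊥) ∧
    (∀ f : Module.Dual k L, coad k x f = 0 ↔ ∀ z : L, ⁅x, z⁆ = 0 → coad k z f = 0) := by
  refine ⟨?_, fun f => ⟨fun hf z hz => ?_, fun h => h x (lie_self x)⟩⟩
  · have hcompl := isCompl_range_ker_coad
      (isCompl_iff.2 ⟨disjoint_iff.2 hint, codisjoint_iff.2 hsum⟩)
    exact ⟨codisjoint_iff.1 hcompl.codisjoint, disjoint_iff.1 hcompl.disjoint⟩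
  · rw [← LinearMap.mem_ker, ker_coad] at hf
    rw [coad_apply_eq_zero_iff]
    exact fun y ↦ (Submodule.mem_dualAnnihilator f).1 hf _
      (lie_mem_range_ad_of_lie_eq_zero hab hsum hz y)

/-- Let `q` be a finite-dimensional Lie algebra over a field of
characteristic zero and `x ∈ q` with `z_q(x)` abelian and `q = [q,x] ⊕ z_q(x)`.
Then `q* = (x·q*) ⊕ (q*)^x`, and moreover `(q*)^x = (q*)^{z_q(x)}`. -/
theorem dual_decomposition_of_generic_point
    {k L : Type*} [Field k] [CharZero k] [LieRing L] [LieAlgebra k L]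
    [FiniteDimensional k L] (x : L)
    (hab : ∀ y z : L, ⁅x, y⁆ = 0 → ⁅x, z⁆ = 0 → ⁅y, z⁆ = 0)
    (hsum : LinearMap.range (LieAlgebra.ad k L x) ⊔ LinearMap.ker (LieAlgebra.ad k L x) = ⊤)
    (hint : LinearMap.range (LieAlgebra.ad k L x) ⊓ LinearMap.ker (LieAlgebra.ad k L x) = ⊥) :
    (LinearMap.range (coad k x) ⊔ LinearMap.ker (coad k x) = ⊤ ∧
      LinearMap.range (coad k x) ⊓ LinearMap.ker (coad k x) = ⊥) ∧
    (∀ f : Module.Dual k L, coad k x f = 0 ↔ ∀ z : L, ⁅x, z⁆ = 0 → coad k z f = 0) :=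
  dual_decomposition_of_generic_point_general x hab hsum hint
end

section
/- Let q be a finite-dimensional Lie algebra over a field of characteristic zero and ξ ∈ q*. Then q·ξ + (q*)^{q_ξ} = q* if and only if q_ξ ∩ [q, q_ξ] = {0}. -/
theorem coad_apply_apply {k L : Type*} [Field k] [LieRing L] [LieAlgebra k L]
    (x : L) (f : Module.Dual k L) (y : L) : coad k x f y = -f ⁅x, y⁆ := rfl

theorem key_range {k L : Type*} [Field k] [LieRing L] [LieAlgebra k L]
    [FiniteDimensional k L] (ξ : Module.Dual k L) :
    LinearMap.range (coadOrbitMap k ξ) =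
      (LinearMap.ker (coadOrbitMap k ξ)).dualAnnihilator := by
  have hle : LinearMap.range (coadOrbitMap k ξ) ≤
      (LinearMap.ker (coadOrbitMap k ξ)).dualAnnihilator := by
    rintro f ⟨z, rfl⟩
    rw [Submodule.mem_dualAnnihilator]
    intro y hy
    have hy' : coad k y ξ = 0 := hy
    have : coad k y ξ z = 0 := by rw [hy']; rfl
    have h2 : ξ ⁅y, z⁆ = 0 := by
      rw [coad_apply_apply] at this; exact neg_eq_zero.mp this
    show coad k z ξ y = 0
    rw [coad_apply_apply, ← lie_skew, map_neg, h2, neg_zero, neg_zero]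
  refine Submodule.eq_of_le_of_finrank_eq hle ?_
  have h1 := LinearMap.finrank_range_add_finrank_ker (coadOrbitMap k ξ)
  have h2 := LinearEquiv.finrank_eq (R := k)
    (M := L ⧸ LinearMap.ker (coadOrbitMap k ξ))
    (N := (LinearMap.ker (coadOrbitMap k ξ)).dualAnnihilator)
    (Subspace.quotEquivAnnihilator (LinearMap.ker (coadOrbitMap k ξ)))
  have h3 := Submodule.finrank_quotient_add_finrank (LinearMap.ker (coadOrbitMap k ξ))
  omega

/-- Tauvel–Yu criterion. Let `q` be a finite-dimensional Lie algebra
over a field of characteristic zero and `ξ ∈ q*`. Then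
`q·ξ + (q*)^{q_ξ} = q*` if and only if `q_ξ ∩ [q, q_ξ] = {0}`. -/
theorem tauvel_yu_criterion
    {k L : Type*} [Field k] [CharZero k] [LieRing L] [LieAlgebra k L]
    [FiniteDimensional k L] (ξ : Module.Dual k L) :
    (LinearMap.range (coadOrbitMap k ξ) ⊔
        (⨅ z ∈ LinearMap.ker (coadOrbitMap k ξ), LinearMap.ker (coad k z)) = ⊤) ↔
      (LinearMap.ker (coadOrbitMap k ξ) ⊓
        Submodule.span k {w : L | ∃ y z : L, z ∈ LinearMap.ker (coadOrbitMap k ξ) ∧ ⁅y, z⁆ = w}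
          = ⊥) := by
  set S := {w : L | ∃ y z : L, z ∈ LinearMap.ker (coadOrbitMap k ξ) ∧ ⁅y, z⁆ = w}
  have hinf : (⨅ z ∈ LinearMap.ker (coadOrbitMap k ξ), LinearMap.ker (coad k z)) =
      (Submodule.span k S).dualAnnihilator := by
    ext f
    simp only [Submodule.mem_iInf, LinearMap.mem_ker, Submodule.mem_dualAnnihilator]
    constructor
    · intro h w hw
      have hS : ∀ w ∈ S, f w = 0 := by
        rintro w ⟨y, z, hz, rfl⟩
        have := h z hz
        have h0 : coad k z f y = 0 := by rw [this]; rfl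
        rw [coad_apply_apply] at h0
        have : f ⁅z, y⁆ = 0 := neg_eq_zero.mp h0
        rw [← lie_skew, map_neg, this, neg_zero]
      have : Submodule.span k S ≤ LinearMap.ker f := by
        rw [Submodule.span_le]; intro w hw; exact hS w hw
      exact this hw
    · intro h z hz
      ext y
      rw [coad_apply_apply]
      have : f ⁅y, z⁆ = 0 := h _ (Submodule.subset_span ⟨y, z, hz, rfl⟩)
      rw [← lie_skew, map_neg, this, neg_zero]
      simp
  rw [key_range, hinf, ← Subspace.dualAnnihilator_inf_eq, ← Submodule.dualAnnihilator_bot,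
    Subspace.dualAnnihilator_inj]
end

section
/- Let q be a Lie algebra over a field of characteristic zero and ξ ∈ q* a point of the dual space such that q_ξ ∩ [q, q_ξ] = {0}. Then the stabilizer q_ξ is an abelian Lie subalgebra of q, and the normalizer of q_ξ in q equals the centralizer of q_ξ in q: n_q(q_ξ) = z_q(q_ξ). -/
/-!
The stabiliser `q_ξ` is a Lie subalgebra (Jacobi identity). For any subalgebra `h` with
`h ∩ [q, h] = 0`, a bracket `⁅y, z⁆` with `z ∈ h` lies in `[q, h]`, so it vanishes as soon as it
lies in `h`. Taking `y ∈ h` gives that `h` is abelian, and taking `y ∈ n_q(h)` gives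
`n_q(h) ⊆ z_q(h)`; the reverse inclusion holds because `0 ∈ h`.
-/

section Subalgebra

variable {R L : Type*} [CommRing R] [LieRing L] [LieAlgebra R L] {H : LieSubalgebra R L}

theorem LieSubalgebra.lie_eq_zero_of_lie_mem
    (hH : ∀ w ∈ H, w ∈ Submodule.span R {u : L | ∃ y z : L, z ∈ H ∧ ⁅y, z⁆ = u} → w = 0)
    {y z : L} (hz : z ∈ H) (hyz : ⁅y, z⁆ ∈ H) : ⁅y, z⁆ = 0 :=
  hH _ hyz (Submodule.subset_span ⟨y, z, hz, rfl⟩)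

theorem LieSubalgebra.lie_eq_zero_of_mem
    (hH : ∀ w ∈ H, w ∈ Submodule.span R {u : L | ∃ y z : L, z ∈ H ∧ ⁅y, z⁆ = u} → w = 0)
    {y z : L} (hy : y ∈ H) (hz : z ∈ H) : ⁅y, z⁆ = 0 :=
  H.lie_eq_zero_of_lie_mem hH hz (H.lie_mem hy hz)

theorem LieSubalgebra.normalizer_set_eq_centralizer_set
    (hH : ∀ w ∈ H, w ∈ Submodule.span R {u : L | ∃ y z : L, z ∈ H ∧ ⁅y, z⁆ = u} → w = 0) :
    {y : L | ∀ z ∈ H, ⁅y, z⁆ ∈ H} = {y : L | ∀ z ∈ H, ⁅y, z⁆ = 0} := by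
  ext y
  refine ⟨fun hy z hz => H.lie_eq_zero_of_lie_mem hH hz (hy z hz), fun hy z hz => ?_⟩
  rw [hy z hz]
  exact H.zero_mem

end Subalgebra

section Coadjoint

variable {k L : Type*} [Field k] [LieRing L] [LieAlgebra k L]

@[simp]
theorem coad_apply (x : L) (f : Module.Dual k L) (y : L) : coad k x f y = -f ⁅x, y⁆ := rfl

theorem coad_eq_zero_iff {x : L} {ξ : Module.Dual k L} :
    coad k x ξ = 0 ↔ ∀ y : L, ξ ⁅x, y⁆ = 0 := by
  simp only [LinearMap.ext_iff, coad_apply, LinearMap.zero_apply, neg_eq_zero]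

theorem coad_lie_eq_zero {ξ : Module.Dual k L} {y z : L}
    (hy : coad k y ξ = 0) (hz : coad k z ξ = 0) : coad k ⁅y, z⁆ ξ = 0 := by
  rw [coad_eq_zero_iff] at hy hz ⊢
  intro w
  rw [lie_lie, map_sub, hy, hz, sub_zero]

variable (k) in
noncomputable def coadStabilizer (ξ : Module.Dual k L) : LieSubalgebra k L :=
  { LinearMap.ker (coadOrbitMap k ξ) with
    lie_mem' := coad_lie_eq_zero }

end Coadjoint

theorem stabilizer_abelian_and_normalizer_eq_centralizer_general
    {k L : Type*} [Field k] [LieRing L] [LieAlgebra k L]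
    (ξ : Module.Dual k L)
    (h : ∀ w : L, coad k w ξ = 0 →
        w ∈ Submodule.span k {u : L | ∃ y z : L, coad k z ξ = 0 ∧ ⁅y, z⁆ = u} → w = 0) :
    (∀ y z : L, coad k y ξ = 0 → coad k z ξ = 0 → ⁅y, z⁆ = 0) ∧
    {y : L | ∀ z : L, coad k z ξ = 0 → coad k ⁅y, z⁆ ξ = 0} =
      {y : L | ∀ z : L, coad k z ξ = 0 → ⁅y, z⁆ = 0} :=
  ⟨fun _ _ => (coadStabilizer k ξ).lie_eq_zero_of_mem h,
    (coadStabilizer k ξ).normalizer_set_eq_centralizer_set h⟩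

/-- Let `q` be a Lie algebra over a field of characteristic zero and
`ξ ∈ q*` a point of the dual space such that `q_ξ ∩ [q, q_ξ] = {0}`. Then the
stabiliser `q_ξ` is abelian, and the normaliser of `q_ξ` in `q` equals the
centraliser of `q_ξ` in `q`. -/
theorem stabilizer_abelian_and_normalizer_eq_centralizer
    {k L : Type*} [Field k] [CharZero k] [LieRing L] [LieAlgebra k L]
    (ξ : Module.Dual k L)
    (h : ∀ w : L, coad k w ξ = 0 →
        w ∈ Submodule.span k {u : L | ∃ y z : L, coad k z ξ = 0 ∧ ⁅y, z⁆ = u} → w = 0) :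
    (∀ y z : L, coad k y ξ = 0 → coad k z ξ = 0 → ⁅y, z⁆ = 0) ∧
    {y : L | ∀ z : L, coad k z ξ = 0 → coad k ⁅y, z⁆ ξ = 0} =
      {y : L | ∀ z : L, coad k z ξ = 0 → ⁅y, z⁆ = 0} :=
  stabilizer_abelian_and_normalizer_eq_centralizer_general ξ h
end

section
/- Let q be a Lie algebra over a field k and V a module over q. Fix v ∈ V, let q_v = {z ∈ q : z·v = 0} be its stabilizer and U = {w ∈ V : z·w = 0 for all z ∈ q_v} the fixed-point space of q_v. Suppose y ∈ U satisfies q_y = q_v. Then (q·y) ∩ U = n_q(q_v)·y, i.e. {z·y : z ∈ q} ∩ U = {z·y : z ∈ n_q(q_v)}. -/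
/-! For `u` in the stabilizer `h` of `y`, the Leibniz rule gives `u·(z·y) = [u,z]·y`. Hence `z·y`
is fixed by `h` exactly when `[h,z]` lies in the stabilizer of `y`, i.e. when `z` normalizes `h`;
since `q_y = q_v`, the stabilizer of `y` may replace that of `v` throughout. -/

section

variable {L V : Type*} [LieRing L] [AddCommGroup V] [LieRingModule L V]

theorem lie_lie_eq_of_lie_eq_zero {u : L} {y : V} (hu : ⁅u, y⁆ = 0) (z : L) :
    ⁅u, ⁅z, y⁆⁆ = -⁅⁅z, u⁆, y⁆ := by
  rw [leibniz_lie, hu, lie_zero, add_zero, ← lie_skew, neg_lie]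

theorem forall_lie_lie_eq_zero_iff_normalizes (y : V) (z : L) :
    (∀ u : L, ⁅u, y⁆ = 0 → ⁅u, ⁅z, y⁆⁆ = 0) ↔ ∀ u : L, ⁅u, y⁆ = 0 → ⁅⁅z, u⁆, y⁆ = 0 :=
  forall₂_congr fun _ hu => by rw [lie_lie_eq_of_lie_eq_zero hu, neg_eq_zero]

end

theorem orbit_inter_fixed_space_eq_normalizer_orbit_general
    {L V : Type*} [LieRing L]
    [AddCommGroup V] [LieRingModule L V]
    (v y : V)
    (heq : ∀ z : L, ⁅z, y⁆ = 0 ↔ ⁅z, v⁆ = 0) :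
    {w : V | (∃ z : L, ⁅z, y⁆ = w) ∧ ∀ u : L, ⁅u, v⁆ = 0 → ⁅u, w⁆ = 0} =
      {w : V | ∃ z : L, (∀ u : L, ⁅u, v⁆ = 0 → ⁅⁅z, u⁆, v⁆ = 0) ∧ ⁅z, y⁆ = w} := by
  simp only [← heq]
  ext w
  constructor
  · rintro ⟨⟨z, rfl⟩, hfixed⟩
    exact ⟨z, (forall_lie_lie_eq_zero_iff_normalizes y z).1 hfixed, rfl⟩
  · rintro ⟨z, hnorm, rfl⟩
    exact ⟨⟨z, rfl⟩, (forall_lie_lie_eq_zero_iff_normalizes y z).2 hnorm⟩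

/-- Let `q` be a Lie algebra over a field `k` and `V` a `q`-module.
Fix `v ∈ V`, let `q_v = {z : z·v = 0}` be its stabiliser and
`U = {w : z·w = 0 for all z ∈ q_v}` the fixed-point space of `q_v`.
If `y ∈ U` satisfies `q_y = q_v`, then `(q·y) ∩ U = n_q(q_v)·y`. -/
theorem orbit_inter_fixed_space_eq_normalizer_orbit
    {k L V : Type*} [Field k] [LieRing L] [LieAlgebra k L]
    [AddCommGroup V] [Module k V] [LieRingModule L V] [LieModule k L V]
    (v y : V)
    (hyU : ∀ z : L, ⁅z, v⁆ = 0 → ⁅z, y⁆ = 0)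
    (heq : ∀ z : L, ⁅z, y⁆ = 0 ↔ ⁅z, v⁆ = 0) :
    {w : V | (∃ z : L, ⁅z, y⁆ = w) ∧ ∀ u : L, ⁅u, v⁆ = 0 → ⁅u, w⁆ = 0} =
      {w : V | ∃ z : L, (∀ u : L, ⁅u, v⁆ = 0 → ⁅⁅z, u⁆, v⁆ = 0) ∧ ⁅z, y⁆ = w} :=
  orbit_inter_fixed_space_eq_normalizer_orbit_general v y heq
end

section
/- Let q be a finite-dimensional Lie algebra over a field k of characteristic zero, V a finite-dimensional q-module, and r = q ⋉ V the semidirect product. Identify r* with q* × V*. For η = (α,ξ) ∈ q* × V*, the coadjoint stabilizer of η in r is r_η = {(s,v) ∈ q × V : ξ(s·w) = 0 for all w ∈ V, and α([s,y]) = ξ(y·v) for all y ∈ q}. Then: (i) r_η = {(s,v) : s ∈ q_ξ, α([s,t]) = 0 for all t ∈ q_ξ, and α([s,y]) = ξ(y·v) for all y ∈ q}; in particular the projection of r_η to q equals the kernel of the restriction to q_ξ of the Kirillov form K_α(s,t) = α([s,t]); and (ii) for every s ∈ q_ξ with α([s,t]) = 0 for all t ∈ q_ξ, there exists v ∈ V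 such that (s,v) ∈ r_η. -/
/-!
The pairing `(y, w) ↦ ξ ⁅y, w⁆` is a bilinear form `B : L × V → k` whose left kernel is the
stabiliser `q_ξ`. The functionals `y ↦ ξ ⁅y, v⁆` are exactly the functionals `B.flip v`, and for
finite-dimensional `V` the range of `B.flip` is the annihilator of `ker B`. So `α ⁅s, ·⁆` is of
this form precisely when it vanishes on `q_ξ`, which is the whole theorem.
-/

namespace LieModule

variable {k L V : Type*} [CommRing k] [LieRing L] [LieAlgebra k L]
  [AddCommGroup V] [Module k V] [LieRingModule L V] [LieModule k L V]

def dualActionForm (ξ : Module.Dual k V) : L →ₗ[k] V →ₗ[k] k :=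
  (toEnd k L V : L →ₗ[k] Module.End k V).compr₂ ξ

@[simp]
lemma dualActionForm_apply (ξ : Module.Dual k V) (y : L) (w : V) :
    dualActionForm ξ y w = ξ ⁅y, w⁆ :=
  rfl

lemma mem_ker_dualActionForm {ξ : Module.Dual k V} {y : L} :
    y ∈ LinearMap.ker (dualActionForm ξ) ↔ ∀ w : V, ξ ⁅y, w⁆ = 0 := by
  simp only [LinearMap.mem_ker, LinearMap.ext_iff, dualActionForm_apply, LinearMap.zero_apply]

end LieModule

theorem LieModule.exists_forall_eq_dual_lie_iff {k L V : Type*} [Field k] [LieRing L]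
    [LieAlgebra k L] [AddCommGroup V] [Module k V] [LieRingModule L V] [LieModule k L V]
    [FiniteDimensional k V] (ξ : Module.Dual k V) (φ : Module.Dual k L) :
    (∃ v : V, ∀ y : L, φ y = ξ ⁅y, v⁆) ↔ ∀ t : L, (∀ w : V, ξ ⁅t, w⁆ = 0) → φ t = 0 := by
  have hrange : φ ∈ LinearMap.range (dualActionForm (L := L) ξ).flip ↔
      φ ∈ (LinearMap.ker (dualActionForm (L := L) ξ)).dualAnnihilator := by
    rw [LinearMap.dualAnnihilator_ker_eq_range_flip]
  simp only [LinearMap.mem_range, LinearMap.ext_iff, LinearMap.flip_apply, dualActionForm_apply,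
    Submodule.mem_dualAnnihilator, mem_ker_dualActionForm] at hrange
  simpa only [eq_comm] using hrange

theorem coadjoint_stabilizer_of_semidirect_product_general
    {k L V : Type*} [Field k] [LieRing L] [LieAlgebra k L]
    [AddCommGroup V] [Module k V] [LieRingModule L V] [LieModule k L V]
    [FiniteDimensional k V]
    (α : Module.Dual k L) (ξ : Module.Dual k V) :
    ({p : L × V | (∀ w : V, ξ ⁅p.1, w⁆ = 0) ∧ ∀ y : L, α ⁅p.1, y⁆ = ξ ⁅y, p.2⁆} =
      {p : L × V | (∀ w : V, ξ ⁅p.1, w⁆ = 0) ∧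
        (∀ t : L, (∀ w : V, ξ ⁅t, w⁆ = 0) → α ⁅p.1, t⁆ = 0) ∧
        ∀ y : L, α ⁅p.1, y⁆ = ξ ⁅y, p.2⁆}) ∧
    ({s : L | ∃ v : V, (∀ w : V, ξ ⁅s, w⁆ = 0) ∧ ∀ y : L, α ⁅s, y⁆ = ξ ⁅y, v⁆} =
      {s : L | (∀ w : V, ξ ⁅s, w⁆ = 0) ∧
        ∀ t : L, (∀ w : V, ξ ⁅t, w⁆ = 0) → α ⁅s, t⁆ = 0}) ∧
    (∀ s : L, (∀ w : V, ξ ⁅s, w⁆ = 0) →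
      (∀ t : L, (∀ w : V, ξ ⁅t, w⁆ = 0) → α ⁅s, t⁆ = 0) →
      ∃ v : V, ∀ y : L, α ⁅s, y⁆ = ξ ⁅y, v⁆) := by
  have kirillov (s : L) : (∃ v : V, ∀ y : L, α ⁅s, y⁆ = ξ ⁅y, v⁆) ↔
      ∀ t : L, (∀ w : V, ξ ⁅t, w⁆ = 0) → α ⁅s, t⁆ = 0 :=
    LieModule.exists_forall_eq_dual_lie_iff ξ (α ∘ₗ LieAlgebra.ad k L s)
  refine ⟨?_, ?_, fun s _ hs => (kirillov s).2 hs⟩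
  · ext p
    exact ⟨fun ⟨hξ, hα⟩ => ⟨hξ, (kirillov p.1).1 ⟨p.2, hα⟩, hα⟩,
      fun ⟨hξ, _, hα⟩ => ⟨hξ, hα⟩⟩
  · ext s
    simp only [Set.mem_ofPred_eq, exists_and_left, kirillov]

/-- Let `q` be a finite-dimensional Lie algebra over a field of
characteristic zero, `V` a finite-dimensional `q`-module, and `r = q ⋉ V`.
Identifying `r*` with `q* × V*`, the coadjoint stabiliser of `η = (α, ξ)` is
`r_η = {(s,v) : ξ(s·w) = 0 ∀ w, and α([s,y]) = ξ(y·v) ∀ y}`.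
Then: (i) `r_η = {(s,v) : s ∈ q_ξ, K_α(s,t) = 0 ∀ t ∈ q_ξ, α([s,y]) = ξ(y·v) ∀ y}`,
and in particular the projection of `r_η` to `q` equals the kernel of the restriction
of the Kirillov form `K_α` to `q_ξ`; (ii) for every `s ∈ q_ξ` with `K_α(s, ·)`
vanishing on `q_ξ`, there exists `v ∈ V` with `(s,v) ∈ r_η`. -/
theorem coadjoint_stabilizer_of_semidirect_product
    {k L V : Type*} [Field k] [CharZero k] [LieRing L] [LieAlgebra k L]
    [AddCommGroup V] [Module k V] [LieRingModule L V] [LieModule k L V]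
    [FiniteDimensional k L] [FiniteDimensional k V]
    (α : Module.Dual k L) (ξ : Module.Dual k V) :
    ({p : L × V | (∀ w : V, ξ ⁅p.1, w⁆ = 0) ∧ ∀ y : L, α ⁅p.1, y⁆ = ξ ⁅y, p.2⁆} =
      {p : L × V | (∀ w : V, ξ ⁅p.1, w⁆ = 0) ∧
        (∀ t : L, (∀ w : V, ξ ⁅t, w⁆ = 0) → α ⁅p.1, t⁆ = 0) ∧
        ∀ y : L, α ⁅p.1, y⁆ = ξ ⁅y, p.2⁆}) ∧
    ({s : L | ∃ v : V, (∀ w : V, ξ ⁅s, w⁆ = 0) ∧ ∀ y : L, α ⁅s, y⁆ = ξ ⁅y, v⁆} =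
      {s : L | (∀ w : V, ξ ⁅s, w⁆ = 0) ∧
        ∀ t : L, (∀ w : V, ξ ⁅t, w⁆ = 0) → α ⁅s, t⁆ = 0}) ∧
    (∀ s : L, (∀ w : V, ξ ⁅s, w⁆ = 0) →
      (∀ t : L, (∀ w : V, ξ ⁅t, w⁆ = 0) → α ⁅s, t⁆ = 0) →
      ∃ v : V, ∀ y : L, α ⁅s, y⁆ = ξ ⁅y, v⁆) :=
  coadjoint_stabilizer_of_semidirect_product_general α ξ
end

section
/- Let q be a Lie algebra over a field k of characteristic zero, V a q-module, and r = q ⋉ V the semidirect product. Let x ∈ q satisfy: z_q(x) is abelian, q = [q,x] ⊕ z_q(x), V = (x·V) ⊕ V^x (direct sums of subspaces), and V^x = V^{z_q(x)}. Then for every v ∈ V^{z_q(x)}: (i) the centralizer of (x,v) in r equals z_q(x) × V^{z_q(x)}; (ii) this centralizer is an abelian subalgebra of r; (iii) [r,(x,v)] = [q,x] × (x·V), and r = [r,(x,v)] ⊕ z_r((x,v)) (direct sum of subspaces). -/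
/-!
Since `⁅x, v⁆ = 0`, the Jacobi identity gives `⁅⁅w, x⁆, v⁆ = ⁅x, -⁅w, v⁆⁆`; together with
`q = [q, x] + z_q(x)` and `z_q(x) · v = 0` this shows `q · v ⊆ x · V`. If `(y, u)` centralises
`(x, v)`, then `⁅x, u⁆ = ⁅y, v⁆` is killed by `x` because `y` and `v` both commute with `x`,
so it lies in `x · V ∩ V^x = 0`. Hence the centraliser is `z_q(x) × V^x`, the image of
`ad (x, v)` is `[q, x] × x · V`, and both direct sum decompositions of `r` are the products
of the given ones.
-/

section

variable {L V : Type*} [LieRing L] [AddCommGroup V] [LieRingModule L V] {x : L} {v : V}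

theorem lie_lie_eq_lie_neg_of_lie_eq_zero (hxv : ⁅x, v⁆ = 0) (w : L) :
    ⁅⁅w, x⁆, v⁆ = ⁅x, -⁅w, v⁆⁆ := by
  rw [lie_lie, hxv, lie_zero, zero_sub, lie_neg]

theorem exists_lie_eq_lie
    (hq1 : ∀ y : L, ∃ a z : L, (∃ w : L, ⁅w, x⁆ = a) ∧ ⁅x, z⁆ = 0 ∧ y = a + z)
    (hv : ∀ z : L, ⁅x, z⁆ = 0 → ⁅z, v⁆ = 0) (hxv : ⁅x, v⁆ = 0) (y : L) :
    ∃ u : V, ⁅x, u⁆ = ⁅y, v⁆ := by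
  obtain ⟨_, z, ⟨w, rfl⟩, hz, rfl⟩ := hq1 y
  exact ⟨-⁅w, v⁆, by rw [add_lie, hv z hz, add_zero, lie_lie_eq_lie_neg_of_lie_eq_zero hxv]⟩

theorem lie_eq_zero_of_lie_eq_lie
    (hV2 : ∀ u : V, (∃ w : V, ⁅x, w⁆ = u) → ⁅x, u⁆ = 0 → u = 0)
    (hxv : ⁅x, v⁆ = 0) {y : L} {u : V} (hy : ⁅x, y⁆ = 0) (h : ⁅x, u⁆ = ⁅y, v⁆) :
    ⁅x, u⁆ = 0 :=
  hV2 _ ⟨u, rfl⟩ (by rw [h, leibniz_lie, hy, zero_lie, hxv, lie_zero, add_zero])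

theorem centralizer_eq_prod
    (hV2 : ∀ u : V, (∃ w : V, ⁅x, w⁆ = u) → ⁅x, u⁆ = 0 → u = 0)
    (hVx : ∀ u : V, ⁅x, u⁆ = 0 ↔ ∀ z : L, ⁅x, z⁆ = 0 → ⁅z, u⁆ = 0)
    (hv : ∀ z : L, ⁅x, z⁆ = 0 → ⁅z, v⁆ = 0) (hxv : ⁅x, v⁆ = 0) :
    {p : L × V | ⁅x, p.1⁆ = 0 ∧ ⁅x, p.2⁆ - ⁅p.1, v⁆ = 0} =
      {p : L × V | ⁅x, p.1⁆ = 0 ∧ ∀ z : L, ⁅x, z⁆ = 0 → ⁅z, p.2⁆ = 0} := by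
  ext ⟨y, u⟩
  simp only [Set.mem_ofPred_eq, sub_eq_zero]
  refine and_congr_right fun hy => ?_
  rw [← hVx u]
  exact ⟨lie_eq_zero_of_lie_eq_lie hV2 hxv hy, fun h => by rw [h, hv y hy]⟩

theorem lie_eq_zero_of_mem_centralizer
    (hab : ∀ y z : L, ⁅x, y⁆ = 0 → ⁅x, z⁆ = 0 → ⁅y, z⁆ = 0)
    (hV2 : ∀ u : V, (∃ w : V, ⁅x, w⁆ = u) → ⁅x, u⁆ = 0 → u = 0)
    (hVx : ∀ u : V, ⁅x, u⁆ = 0 ↔ ∀ z : L, ⁅x, z⁆ = 0 → ⁅z, u⁆ = 0)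
    (hv : ∀ z : L, ⁅x, z⁆ = 0 → ⁅z, v⁆ = 0) (hxv : ⁅x, v⁆ = 0) {p q : L × V}
    (hp : ⁅x, p.1⁆ = 0 ∧ ⁅x, p.2⁆ - ⁅p.1, v⁆ = 0)
    (hq : ⁅x, q.1⁆ = 0 ∧ ⁅x, q.2⁆ - ⁅q.1, v⁆ = 0) :
    ⁅p.1, q.1⁆ = 0 ∧ ⁅p.1, q.2⁆ - ⁅q.1, p.2⁆ = 0 := by
  obtain ⟨hp1, hp2⟩ := (centralizer_eq_prod hV2 hVx hv hxv).subset hp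
  obtain ⟨hq1, hq2⟩ := (centralizer_eq_prod hV2 hVx hv hxv).subset hq
  exact ⟨hab _ _ hp1 hq1, by rw [hq2 p.1 hp1, hp2 q.1 hq1, sub_zero]⟩

theorem range_ad_eq_prod
    (hq1 : ∀ y : L, ∃ a z : L, (∃ w : L, ⁅w, x⁆ = a) ∧ ⁅x, z⁆ = 0 ∧ y = a + z)
    (hv : ∀ z : L, ⁅x, z⁆ = 0 → ⁅z, v⁆ = 0) (hxv : ⁅x, v⁆ = 0) :
    {p : L × V | ∃ y : L, ∃ w : V, p = (⁅y, x⁆, ⁅y, v⁆ - ⁅x, w⁆)} =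
      {p : L × V | (∃ y : L, ⁅y, x⁆ = p.1) ∧ ∃ w : V, ⁅x, w⁆ = p.2} := by
  ext ⟨a, c⟩
  simp only [Set.mem_ofPred_eq, Prod.mk.injEq]
  constructor
  · rintro ⟨y, w, rfl, rfl⟩
    obtain ⟨u, hu⟩ := exists_lie_eq_lie hq1 hv hxv y
    exact ⟨⟨y, rfl⟩, u - w, by rw [lie_sub, hu]⟩
  · rintro ⟨⟨y, rfl⟩, w, rfl⟩
    obtain ⟨u, hu⟩ := exists_lie_eq_lie hq1 hv hxv y
    exact ⟨y, u - w, rfl, by rw [lie_sub, hu, sub_sub_cancel]⟩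

theorem exists_add_mem_range_ad_mem_centralizer
    (hq1 : ∀ y : L, ∃ a z : L, (∃ w : L, ⁅w, x⁆ = a) ∧ ⁅x, z⁆ = 0 ∧ y = a + z)
    (hV1 : ∀ u : V, ∃ a b : V, (∃ w : V, ⁅x, w⁆ = a) ∧ ⁅x, b⁆ = (0 : V) ∧ u = a + b)
    (hv : ∀ z : L, ⁅x, z⁆ = 0 → ⁅z, v⁆ = 0) (hxv : ⁅x, v⁆ = 0) (p : L × V) :
    ∃ a b : L × V,
      (∃ y : L, ∃ w : V, a = (⁅y, x⁆, ⁅y, v⁆ - ⁅x, w⁆)) ∧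
      (⁅x, b.1⁆ = 0 ∧ ⁅x, b.2⁆ - ⁅b.1, v⁆ = 0) ∧ p = a + b := by
  obtain ⟨_, z, ⟨y, rfl⟩, hz, hp1⟩ := hq1 p.1
  obtain ⟨_, b, ⟨u, rfl⟩, hb, hp2⟩ := hV1 p.2
  exact ⟨(⁅y, x⁆, ⁅x, u⁆), (z, b), (range_ad_eq_prod hq1 hv hxv).superset ⟨⟨y, rfl⟩, u, rfl⟩,
    ⟨hz, by rw [hb, hv z hz, sub_zero]⟩, Prod.ext hp1 hp2⟩

theorem eq_zero_of_mem_range_ad_of_mem_centralizer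
    (hq1 : ∀ y : L, ∃ a z : L, (∃ w : L, ⁅w, x⁆ = a) ∧ ⁅x, z⁆ = 0 ∧ y = a + z)
    (hq2 : ∀ y : L, (∃ w : L, ⁅w, x⁆ = y) → ⁅x, y⁆ = 0 → y = 0)
    (hV2 : ∀ u : V, (∃ w : V, ⁅x, w⁆ = u) → ⁅x, u⁆ = 0 → u = 0)
    (hv : ∀ z : L, ⁅x, z⁆ = 0 → ⁅z, v⁆ = 0) (hxv : ⁅x, v⁆ = 0) {p : L × V}
    (hp : ∃ y : L, ∃ w : V, p = (⁅y, x⁆, ⁅y, v⁆ - ⁅x, w⁆))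
    (hc : ⁅x, p.1⁆ = 0 ∧ ⁅x, p.2⁆ - ⁅p.1, v⁆ = 0) : p = 0 := by
  obtain ⟨hp1, hp2⟩ := (range_ad_eq_prod hq1 hv hxv).subset hp
  have hx2 : ⁅x, p.2⁆ = 0 := lie_eq_zero_of_lie_eq_lie hV2 hxv hc.1 (sub_eq_zero.mp hc.2)
  exact Prod.ext (hq2 _ hp1 hc.1) (hV2 _ hp2 hx2)

end

theorem semidirect_generic_centralizer_general
    {L V : Type*} [LieRing L]
    [AddCommGroup V] [LieRingModule L V]
    (x : L) (v : V)
    (hab : ∀ y z : L, ⁅x, y⁆ = 0 → ⁅x, z⁆ = 0 → ⁅y, z⁆ = 0)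
    (hq1 : ∀ y : L, ∃ a z : L, (∃ w : L, ⁅w, x⁆ = a) ∧ ⁅x, z⁆ = 0 ∧ y = a + z)
    (hq2 : ∀ y : L, (∃ w : L, ⁅w, x⁆ = y) → ⁅x, y⁆ = 0 → y = 0)
    (hV1 : ∀ u : V, ∃ a b : V, (∃ w : V, ⁅x, w⁆ = a) ∧ ⁅x, b⁆ = (0 : V) ∧ u = a + b)
    (hV2 : ∀ u : V, (∃ w : V, ⁅x, w⁆ = u) → ⁅x, u⁆ = 0 → u = 0)
    (hVx : ∀ u : V, ⁅x, u⁆ = 0 ↔ ∀ z : L, ⁅x, z⁆ = 0 → ⁅z, u⁆ = 0)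
    (hv : ∀ z : L, ⁅x, z⁆ = 0 → ⁅z, v⁆ = 0) :
    -- (i) the centraliser of (x,v) in r equals z_q(x) × V^{z_q(x)}
    ({p : L × V | ⁅x, p.1⁆ = 0 ∧ ⁅x, p.2⁆ - ⁅p.1, v⁆ = 0} =
      {p : L × V | ⁅x, p.1⁆ = 0 ∧ ∀ z : L, ⁅x, z⁆ = 0 → ⁅z, p.2⁆ = 0}) ∧
    -- (ii) the centraliser is an abelian subalgebra of r
    (∀ p q : L × V, (⁅x, p.1⁆ = 0 ∧ ⁅x, p.2⁆ - ⁅p.1, v⁆ = 0) →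
      (⁅x, q.1⁆ = 0 ∧ ⁅x, q.2⁆ - ⁅q.1, v⁆ = 0) →
      ⁅p.1, q.1⁆ = 0 ∧ ⁅p.1, q.2⁆ - ⁅q.1, p.2⁆ = 0) ∧
    -- (iii) [r,(x,v)] = [q,x] × (x·V) ...
    ({p : L × V | ∃ y : L, ∃ w : V, p = (⁅y, x⁆, ⁅y, v⁆ - ⁅x, w⁆)} =
      {p : L × V | (∃ y : L, ⁅y, x⁆ = p.1) ∧ ∃ w : V, ⁅x, w⁆ = p.2}) ∧
    -- ... and r = [r,(x,v)] ⊕ z_r((x,v))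
    (∀ p : L × V, ∃ a b : L × V,
      (∃ y : L, ∃ w : V, a = (⁅y, x⁆, ⁅y, v⁆ - ⁅x, w⁆)) ∧
      (⁅x, b.1⁆ = 0 ∧ ⁅x, b.2⁆ - ⁅b.1, v⁆ = 0) ∧ p = a + b) ∧
    (∀ p : L × V, (∃ y : L, ∃ w : V, p = (⁅y, x⁆, ⁅y, v⁆ - ⁅x, w⁆)) →
      (⁅x, p.1⁆ = 0 ∧ ⁅x, p.2⁆ - ⁅p.1, v⁆ = 0) → p = 0) := by
  have hxv : ⁅x, v⁆ = 0 := (hVx v).mpr hv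
  exact ⟨centralizer_eq_prod hV2 hVx hv hxv,
    fun _ _ => lie_eq_zero_of_mem_centralizer hab hV2 hVx hv hxv,
    range_ad_eq_prod hq1 hv hxv,
    exists_add_mem_range_ad_mem_centralizer hq1 hV1 hv hxv,
    fun _ => eq_zero_of_mem_range_ad_of_mem_centralizer hq1 hq2 hV2 hv hxv⟩

/-- Let `q` be a Lie algebra over a field of characteristic zero,
`V` a `q`-module and `r = q ⋉ V` (with bracket
`[(x,v),(x',v')] = ([x,x'], x·v' − x'·v)`). Let `x ∈ q` satisfy: `z_q(x)` is abelian,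
`q = [q,x] ⊕ z_q(x)`, `V = (x·V) ⊕ V^x`, and `V^x = V^{z_q(x)}`. Then for every
`v ∈ V^{z_q(x)}`:
(i) the centraliser of `(x,v)` in `r` equals `z_q(x) × V^{z_q(x)}`;
(ii) this centraliser is an abelian subalgebra of `r`;
(iii) `[r,(x,v)] = [q,x] × (x·V)` and `r = [r,(x,v)] ⊕ z_r((x,v))`. -/
theorem semidirect_generic_centralizer
    {k L V : Type*} [Field k] [CharZero k] [LieRing L] [LieAlgebra k L]
    [AddCommGroup V] [Module k V] [LieRingModule L V] [LieModule k L V]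
    (x : L) (v : V)
    (hab : ∀ y z : L, ⁅x, y⁆ = 0 → ⁅x, z⁆ = 0 → ⁅y, z⁆ = 0)
    (hq1 : ∀ y : L, ∃ a z : L, (∃ w : L, ⁅w, x⁆ = a) ∧ ⁅x, z⁆ = 0 ∧ y = a + z)
    (hq2 : ∀ y : L, (∃ w : L, ⁅w, x⁆ = y) → ⁅x, y⁆ = 0 → y = 0)
    (hV1 : ∀ u : V, ∃ a b : V, (∃ w : V, ⁅x, w⁆ = a) ∧ ⁅x, b⁆ = (0 : V) ∧ u = a + b)
    (hV2 : ∀ u : V, (∃ w : V, ⁅x, w⁆ = u) → ⁅x, u⁆ = 0 → u = 0)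
    (hVx : ∀ u : V, ⁅x, u⁆ = 0 ↔ ∀ z : L, ⁅x, z⁆ = 0 → ⁅z, u⁆ = 0)
    (hv : ∀ z : L, ⁅x, z⁆ = 0 → ⁅z, v⁆ = 0) :
    -- (i) the centraliser of (x,v) in r equals z_q(x) × V^{z_q(x)}
    ({p : L × V | ⁅x, p.1⁆ = 0 ∧ ⁅x, p.2⁆ - ⁅p.1, v⁆ = 0} =
      {p : L × V | ⁅x, p.1⁆ = 0 ∧ ∀ z : L, ⁅x, z⁆ = 0 → ⁅z, p.2⁆ = 0}) ∧
    -- (ii) the centraliser is an abelian subalgebra of r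
    (∀ p q : L × V, (⁅x, p.1⁆ = 0 ∧ ⁅x, p.2⁆ - ⁅p.1, v⁆ = 0) →
      (⁅x, q.1⁆ = 0 ∧ ⁅x, q.2⁆ - ⁅q.1, v⁆ = 0) →
      ⁅p.1, q.1⁆ = 0 ∧ ⁅p.1, q.2⁆ - ⁅q.1, p.2⁆ = 0) ∧
    -- (iii) [r,(x,v)] = [q,x] × (x·V) ...
    ({p : L × V | ∃ y : L, ∃ w : V, p = (⁅y, x⁆, ⁅y, v⁆ - ⁅x, w⁆)} =
      {p : L × V | (∃ y : L, ⁅y, x⁆ = p.1) ∧ ∃ w : V, ⁅x, w⁆ = p.2}) ∧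
    -- ... and r = [r,(x,v)] ⊕ z_r((x,v))
    (∀ p : L × V, ∃ a b : L × V,
      (∃ y : L, ∃ w : V, a = (⁅y, x⁆, ⁅y, v⁆ - ⁅x, w⁆)) ∧
      (⁅x, b.1⁆ = 0 ∧ ⁅x, b.2⁆ - ⁅b.1, v⁆ = 0) ∧ p = a + b) ∧
    (∀ p : L × V, (∃ y : L, ∃ w : V, p = (⁅y, x⁆, ⁅y, v⁆ - ⁅x, w⁆)) →
      (⁅x, p.1⁆ = 0 ∧ ⁅x, p.2⁆ - ⁅p.1, v⁆ = 0) → p = 0) :=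
  semidirect_generic_centralizer_general x v hab hq1 hq2 hV1 hV2 hVx hv
end

section
/- Let n ≥ 1 and let η be a partition of 2n in which every odd part occurs with even multiplicity (a symplectic partition), with dual partition η̂ = (η̂₁,…,η̂_s), s = η₁. Then (1/2)(Σ_{i=1}^{s} η̂ᵢ² + o(η)) + 2⌊s/2⌋ − 3n ≥ 0, and equality holds if and only if η has at most two parts (equivalently η̂₁ ≤ 2). -/
/-!
Write `dᵢ = η̂ᵢ` and `s = η₁`. Since `Σ dᵢ = 2n` and `d² + 2 = 3d + (d - 1)(d - 2)`, twice the
left-hand side equals `Σ (dᵢ - 1)(dᵢ - 2) + (o(η) + 4⌊s/2⌋ - 2s)`. Each `(dᵢ - 1)(dᵢ - 2)` is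
nonnegative because `dᵢ` is an integer, and the sum vanishes iff every `dᵢ` is `1` or `2`, i.e. iff
`d₁ = #parts ≤ 2`. The second term is `o(η)` for even `s`, and `o(η) - 2` for odd `s`, where the
largest part `s` is odd and so occurs at least twice; it vanishes when `η` has at most two parts,
since then an odd part forces `η = (a, a)` with `s = a` odd.
-/

/-- The `i`-th entry of the dual partition: `η̂ᵢ = #{j : η_j ≥ i}` (parts counted with
multiplicity). -/
def dualPart {N : ℕ} (η : Nat.Partition N) (i : ℕ) : ℕ :=
  (η.parts.filter (fun j => i ≤ j)).card

/-- The number `o(η)` of odd parts of a partition. -/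
def oddCount {N : ℕ} (η : Nat.Partition N) : ℕ :=
  (η.parts.filter (fun j => Odd j)).card

theorem Multiset.sup_mem_of_ne_zero {α : Type*} [LinearOrder α] [OrderBot α] {m : Multiset α}
    (h : m ≠ 0) : m.sup ∈ m := by
  obtain ⟨a, ha, hsup⟩ := Finset.exists_mem_eq_sup m.toFinset (by simpa using h) id
  rw [← Multiset.sup_dedup]
  simp only [Finset.sup_def, Multiset.toFinset_val, Multiset.map_id', id] at hsup
  simpa [hsup] using ha

theorem Multiset.sum_Icc_card_filter_le {s : ℕ} {m : Multiset ℕ} (h : ∀ j ∈ m, j ≤ s) :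
    ∑ i ∈ Finset.Icc 1 s, (m.filter (i ≤ ·)).card = m.sum := by
  induction m using Multiset.induction with
  | empty => simp
  | cons a m ih =>
    have hboole : ∑ i ∈ Finset.Icc 1 s, (if i ≤ a then 1 else 0) = a := by
      have ha : a ≤ s := h a (Multiset.mem_cons_self a m)
      have hfilter : {i ∈ Finset.Icc 1 s | i ≤ a} = Finset.Icc 1 a := by
        ext i; simp only [Finset.mem_filter, Finset.mem_Icc]; omega
      rw [Finset.sum_boole, hfilter, Nat.card_Icc, Nat.cast_id, Nat.add_sub_cancel]
    simp only [← Multiset.countP_eq_card_filter, Multiset.countP_cons, Finset.sum_add_distrib,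
      Multiset.sum_cons] at ih ⊢
    rw [ih fun j hj => h j (Multiset.mem_cons_of_mem hj), hboole, add_comm]

theorem natCast_sub_one_mul_sub_two_nonneg {R : Type*} [CommRing R] [LinearOrder R]
    [IsStrictOrderedRing R] (d : ℕ) : 0 ≤ ((d : R) - 1) * ((d : R) - 2) := by
  rcases d with _ | _ | _ | d
  · norm_num
  · norm_num
  · norm_num
  · push_cast
    nlinarith

theorem natCast_sub_one_mul_sub_two_eq_zero_iff {R : Type*} [CommRing R] [LinearOrder R]
    [IsStrictOrderedRing R] {d : ℕ} : ((d : R) - 1) * ((d : R) - 2) = 0 ↔ d = 1 ∨ d = 2 := by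
  rw [mul_eq_zero, sub_eq_zero, sub_eq_zero]
  norm_cast

section DualPartition

variable {N : ℕ} (η : Nat.Partition N)

theorem dualPart_le_card (i : ℕ) : dualPart η i ≤ Multiset.card η.parts :=
  Multiset.card_le_card (Multiset.filter_le _ _)

theorem dualPart_one : dualPart η 1 = Multiset.card η.parts :=
  congrArg Multiset.card (Multiset.filter_eq_self.mpr fun _ hj => η.parts_pos hj)

theorem one_le_dualPart {i : ℕ} (hi : i ∈ Finset.Icc 1 η.parts.sup) : 1 ≤ dualPart η i := by
  rw [Finset.mem_Icc] at hi
  have hsup : η.parts.sup ∈ η.parts := Multiset.sup_mem_of_ne_zero fun h => by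
    simp [h] at hi; omega
  exact Multiset.card_pos_iff_exists_mem.mpr ⟨_, Multiset.mem_filter.mpr ⟨hsup, hi.2⟩⟩

theorem sum_dualPart : ∑ i ∈ Finset.Icc 1 η.parts.sup, dualPart η i = N := by
  conv_rhs => rw [← η.parts_sum]
  exact Multiset.sum_Icc_card_filter_le fun _ => Multiset.le_sup

theorem sum_sq_dualPart :
    ∑ i ∈ Finset.Icc 1 η.parts.sup, (dualPart η i : ℚ) ^ 2 =
      3 * N - 2 * η.parts.sup +
        ∑ i ∈ Finset.Icc 1 η.parts.sup, ((dualPart η i : ℚ) - 1) * ((dualPart η i : ℚ) - 2) := by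
  have hsum : ∑ i ∈ Finset.Icc 1 η.parts.sup, (dualPart η i : ℚ) = N := by
    exact_mod_cast sum_dualPart η
  have hterm : ∀ i, ((dualPart η i : ℚ) - 1) * ((dualPart η i : ℚ) - 2) =
      (dualPart η i : ℚ) ^ 2 - 3 * (dualPart η i : ℚ) + 2 := fun i => by ring
  simp only [hterm, Finset.sum_add_distrib, Finset.sum_sub_distrib, ← Finset.mul_sum, hsum,
    Finset.sum_const, Nat.card_Icc, nsmul_eq_mul]
  push_cast
  ring

theorem sum_dualPart_sub_one_mul_sub_two_eq_zero_iff :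
    ∑ i ∈ Finset.Icc 1 η.parts.sup, ((dualPart η i : ℚ) - 1) * ((dualPart η i : ℚ) - 2) = 0 ↔
      Multiset.card η.parts ≤ 2 := by
  rw [Finset.sum_eq_zero_iff_of_nonneg fun i _ => natCast_sub_one_mul_sub_two_nonneg _]
  simp only [natCast_sub_one_mul_sub_two_eq_zero_iff]
  constructor
  · intro h
    by_contra! hcard
    obtain ⟨j, hj⟩ := Multiset.card_pos_iff_exists_mem.mp (by omega : 0 < Multiset.card η.parts)
    have h1 : 1 ∈ Finset.Icc 1 η.parts.sup :=
      Finset.mem_Icc.mpr ⟨le_rfl, (η.parts_pos hj).trans_le (Multiset.le_sup hj)⟩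
    have := h 1 h1
    rw [dualPart_one] at this
    omega
  · intro hcard i hi
    have := one_le_dualPart η hi
    have := dualPart_le_card η i
    omega

end DualPartition

def Nat.Partition.IsSymplectic {N : ℕ} (η : Nat.Partition N) : Prop :=
  ∀ j : ℕ, Odd j → Even (Multiset.count j η.parts)

namespace Nat.Partition.IsSymplectic

variable {N : ℕ} {η : Nat.Partition N}

theorem two_le_count (hη : η.IsSymplectic) {j : ℕ} (hj : Odd j) (hmem : j ∈ η.parts) :
    2 ≤ Multiset.count j η.parts := by
  have := Multiset.one_le_count_iff_mem.mpr hmem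
  obtain ⟨k, hk⟩ := hη j hj
  omega

theorem two_le_oddCount (hη : η.IsSymplectic) (hs : Odd η.parts.sup) : 2 ≤ oddCount η := by
  have hsup : η.parts.sup ∈ η.parts := Multiset.sup_mem_of_ne_zero fun h => by
    simp [h] at hs
  calc 2 ≤ Multiset.count η.parts.sup η.parts := hη.two_le_count hs hsup
    _ = Multiset.count η.parts.sup (η.parts.filter Odd) := (Multiset.count_filter_of_pos hs).symm
    _ ≤ oddCount η := Multiset.count_le_card _ _

theorem oddCount_eq_zero (hη : η.IsSymplectic) (hs : Even η.parts.sup)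
    (hcard : Multiset.card η.parts ≤ 2) : oddCount η = 0 := by
  by_contra ho
  obtain ⟨a, ha⟩ := Multiset.card_pos_iff_exists_mem.mp (Nat.pos_of_ne_zero ho)
  obtain ⟨hmem, hodd⟩ := Multiset.mem_filter.mp ha
  have hparts : η.parts = Multiset.replicate 2 a :=
    (Multiset.eq_of_le_of_card_le (Multiset.le_count_iff_replicate_le.mp
      (hη.two_le_count hodd hmem)) (by simpa using hcard)).symm
  rw [hparts] at hs
  simp only [Multiset.replicate_succ, Multiset.replicate_zero, Multiset.cons_zero,
    Multiset.sup_cons, Multiset.sup_singleton, max_self] at hs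
  exact Nat.not_even_iff_odd.mpr hodd hs

theorem two_mul_sup_le (hη : η.IsSymplectic) :
    2 * η.parts.sup ≤ oddCount η + 4 * (η.parts.sup / 2) := by
  rcases Nat.even_or_odd η.parts.sup with hs | hs
  · obtain ⟨k, hk⟩ := hs; omega
  · have := hη.two_le_oddCount hs
    obtain ⟨k, hk⟩ := hs; omega

theorem oddCount_add_eq (hη : η.IsSymplectic) (hcard : Multiset.card η.parts ≤ 2) :
    oddCount η + 4 * (η.parts.sup / 2) = 2 * η.parts.sup := by
  rcases Nat.even_or_odd η.parts.sup with hs | hs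
  · have := hη.oddCount_eq_zero hs hcard
    obtain ⟨k, hk⟩ := hs; omega
  · have := hη.two_le_oddCount hs
    have : oddCount η ≤ Multiset.card η.parts := Multiset.card_le_card (Multiset.filter_le _ _)
    obtain ⟨k, hk⟩ := hs; omega

end Nat.Partition.IsSymplectic

theorem sp_inequality_general (n : ℕ) (η : Nat.Partition (2 * n))
    (hsymp : ∀ j : ℕ, Odd j → Even (Multiset.count j η.parts)) :
    (0 ≤ (1 / 2 : ℚ) * ((∑ i ∈ Finset.Icc 1 η.parts.sup, (dualPart η i : ℚ) ^ 2)
          + (oddCount η : ℚ))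
        + 2 * ((η.parts.sup / 2 : ℕ) : ℚ) - 3 * (n : ℚ)) ∧
    ((1 / 2 : ℚ) * ((∑ i ∈ Finset.Icc 1 η.parts.sup, (dualPart η i : ℚ) ^ 2)
          + (oddCount η : ℚ))
        + 2 * ((η.parts.sup / 2 : ℕ) : ℚ) - 3 * (n : ℚ) = 0 ↔
      Multiset.card η.parts ≤ 2) := by
  have hη : η.IsSymplectic := hsymp
  have hsq := sum_sq_dualPart η
  have hdefect : 0 ≤ ∑ i ∈ Finset.Icc 1 η.parts.sup,
      ((dualPart η i : ℚ) - 1) * ((dualPart η i : ℚ) - 2) :=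
    Finset.sum_nonneg fun _ _ => natCast_sub_one_mul_sub_two_nonneg _
  have hodd : (2 * η.parts.sup : ℚ) ≤ oddCount η + 4 * ((η.parts.sup / 2 : ℕ) : ℚ) := by
    exact_mod_cast hη.two_mul_sup_le
  push_cast at hsq
  refine ⟨by linarith,
    fun h => (sum_dualPart_sub_one_mul_sub_two_eq_zero_iff η).mp (by linarith), fun h => ?_⟩
  have hodd_eq : oddCount η + 4 * ((η.parts.sup / 2 : ℕ) : ℚ) = 2 * η.parts.sup := by
    exact_mod_cast hη.oddCount_add_eq h
  linarith [(sum_dualPart_sub_one_mul_sub_two_eq_zero_iff η).mpr h]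

/-- the case `g = sp_{2n}`. Let `n ≥ 1` and let `η` be a symplectic
partition of `2n` (every odd part occurs with even multiplicity), with dual partition
`η̂ = (η̂₁,…,η̂_s)`, `s = η₁`. Then
`(1/2)(Σ η̂ᵢ² + o(η)) + 2⌊s/2⌋ − 3n ≥ 0`, with equality iff `η` has at most two parts
(equivalently `η̂₁ ≤ 2`). -/
theorem sp_inequality (n : ℕ) (hn : 1 ≤ n) (η : Nat.Partition (2 * n))
    (hsymp : ∀ j : ℕ, Odd j → Even (Multiset.count j η.parts)) :
    (0 ≤ (1 / 2 : ℚ) * ((∑ i ∈ Finset.Icc 1 η.parts.sup, (dualPart η i : ℚ) ^ 2)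
          + (oddCount η : ℚ))
        + 2 * ((η.parts.sup / 2 : ℕ) : ℚ) - 3 * (n : ℚ)) ∧
    ((1 / 2 : ℚ) * ((∑ i ∈ Finset.Icc 1 η.parts.sup, (dualPart η i : ℚ) ^ 2)
          + (oddCount η : ℚ))
        + 2 * ((η.parts.sup / 2 : ℕ) : ℚ) - 3 * (n : ℚ) = 0 ↔
      Multiset.card η.parts ≤ 2) :=
  sp_inequality_general n η hsymp
end

section
/- Let n ≥ 1 and let η be a partition of 2n+1 in which every even part occurs with even multiplicity (an orthogonal partition), with dual partition η̂ = (η̂₁,…,η̂_s), s = η₁. Then (1/2)(Σ_{i=1}^{s} η̂ᵢ² − o(η)) + 2⌊s/2⌋ − 3n ≥ 0, and equality holds if and only if either η = (2n+1) has a single part, or η has exactly three parts, all of them odd, the smallest part being equal to 1. -/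
namespace SoOdd

def Smin (M : Multiset ℕ) : ℕ := (M.map (fun a => (M.map (fun b => min a b)).sum)).sum

lemma sup_mem {M : Multiset ℕ} (h : M ≠ 0) : M.sup ∈ M := by
  induction M using Multiset.induction with
  | empty => simp at h
  | cons a M ih =>
    rw [Multiset.sup_cons]
    rcases eq_or_ne M 0 with rfl | hM
    · simp
    · rcases le_total a M.sup with hle | hle
      · rw [sup_eq_right.mpr hle]
        exact Multiset.mem_cons_of_mem (ih hM)
      · rw [sup_eq_left.mpr hle]; exact Multiset.mem_cons_self a M

lemma sum_swap' (I : Finset ℕ) (M : Multiset ℕ) (g : ℕ → ℕ → ℕ) :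
    ∑ i ∈ I, (M.map (g i)).sum = (M.map (fun a => ∑ i ∈ I, g i a)).sum := by
  induction M using Multiset.induction with
  | empty => simp
  | cons a M ih => simp [Finset.sum_add_distrib, ih]

lemma card_filter_eq_sum (p : ℕ → Prop) [DecidablePred p] (M : Multiset ℕ) :
    (M.filter p).card = (M.map (fun a => if p a then 1 else 0)).sum := by
  induction M using Multiset.induction with
  | empty => simp
  | cons a M ih =>
    rw [Multiset.filter_cons, Multiset.map_cons, Multiset.sum_cons, ← ih]
    split_ifs <;> simp <;> omega

lemma sum_ite_le (s m : ℕ) (hm : m ≤ s) :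
    (∑ i ∈ Finset.Icc 1 s, if i ≤ m then 1 else 0) = m := by
  rw [Finset.sum_ite, Finset.sum_const, Finset.sum_const_zero, add_zero]
  have h : (Finset.Icc 1 s).filter (fun i => i ≤ m) = Finset.Icc 1 m := by
    ext i; simp only [Finset.mem_filter, Finset.mem_Icc]; omega
  rw [h, Nat.card_Icc, smul_eq_mul, mul_one]
  omega

lemma sum_sq_dual (M : Multiset ℕ) :
    ∑ i ∈ Finset.Icc 1 M.sup, ((M.filter (fun j => i ≤ j)).card) ^ 2 = Smin M := by
  have step1 : ∀ i : ℕ, ((M.filter (fun j => i ≤ j)).card) ^ 2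
      = (M.map (fun a => (M.map (fun b =>
          (if i ≤ a then 1 else 0) * (if i ≤ b then 1 else 0))).sum)).sum := by
    intro i
    rw [card_filter_eq_sum, pow_two, ← Multiset.sum_map_mul_right]
    congr 1
    apply Multiset.map_congr rfl
    intro a _
    rw [← Multiset.sum_map_mul_left]
  calc ∑ i ∈ Finset.Icc 1 M.sup, ((M.filter (fun j => i ≤ j)).card) ^ 2
      = ∑ i ∈ Finset.Icc 1 M.sup, (M.map (fun a => (M.map (fun b =>
          (if i ≤ a then 1 else 0) * (if i ≤ b then 1 else 0))).sum)).sum :=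
        Finset.sum_congr rfl fun i _ => step1 i
    _ = (M.map (fun a => ∑ i ∈ Finset.Icc 1 M.sup, (M.map (fun b =>
          (if i ≤ a then 1 else 0) * (if i ≤ b then 1 else 0))).sum)).sum :=
        sum_swap' _ _ _
    _ = Smin M := by
        rw [Smin]
        congr 1
        apply Multiset.map_congr rfl
        intro a ha
        rw [sum_swap' _ _ (fun i b => (if i ≤ a then 1 else 0) * (if i ≤ b then 1 else 0))]
        congr 1
        apply Multiset.map_congr rfl
        intro b _
        have hab : min a b ≤ M.sup := le_trans (min_le_left _ _) (Multiset.le_sup ha)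
        rw [← sum_ite_le M.sup (min a b) hab]
        apply Finset.sum_congr rfl
        intro i _
        by_cases h1 : i ≤ a <;> by_cases h2 : i ≤ b <;>
          simp [h1, h2, le_min_iff] <;> omega

lemma Smin_cons (a : ℕ) (M : Multiset ℕ) :
    Smin (a ::ₘ M) = a + 2 * (M.map (fun x => min a x)).sum + Smin M := by
  simp only [Smin, Multiset.map_cons, Multiset.sum_cons, min_self]
  have h1 : (M.map (fun x => min x a)).sum = (M.map (fun x => min a x)).sum := by
    congr 1; apply Multiset.map_congr rfl; intro x _; exact min_comm x a
  have h2 : (M.map (fun x => min x a + (M.map (fun b => min x b)).sum)).sum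
      = (M.map (fun x => min x a)).sum + (M.map (fun x => (M.map (fun b => min x b)).sum)).sum := by
    rw [← Multiset.sum_map_add]
  rw [h2, h1]; ring

lemma min_sum_ge (a : ℕ) (ha : 1 ≤ a) (M : Multiset ℕ) (hM : ∀ x ∈ M, 1 ≤ x) :
    M.card ≤ (M.map (fun x => min a x)).sum := by
  induction M using Multiset.induction with
  | empty => simp
  | cons b M ih =>
    simp only [Multiset.map_cons, Multiset.sum_cons, Multiset.card_cons]
    have hb : 1 ≤ min a b := le_min ha (hM b (Multiset.mem_cons_self b M))
    have := ih (fun x hx => hM x (Multiset.mem_cons_of_mem hx))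
    omega

lemma Smin_ge (M : Multiset ℕ) (hM : ∀ x ∈ M, 1 ≤ x) :
    M.sum + M.card * M.card ≤ Smin M + M.card := by
  induction M using Multiset.induction with
  | empty => simp [Smin]
  | cons a M ih =>
    rw [Smin_cons]
    have ha : 1 ≤ a := hM a (Multiset.mem_cons_self a M)
    have h1 : M.card ≤ (M.map (fun x => min a x)).sum :=
      min_sum_ge a ha M (fun x hx => hM x (Multiset.mem_cons_of_mem hx))
    have h2 := ih (fun x hx => hM x (Multiset.mem_cons_of_mem hx))
    simp only [Multiset.sum_cons, Multiset.card_cons]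
    have hx : (Multiset.card M + 1) * (Multiset.card M + 1)
        = Multiset.card M * Multiset.card M + 2 * Multiset.card M + 1 := by ring
    omega

set_option maxHeartbeats 1600000 in
lemma key (n : ℕ) (hn : 1 ≤ n) (M : Multiset ℕ) (hpos : ∀ x ∈ M, 1 ≤ x)
    (hsum : M.sum = 2*n+1) (horth : ∀ j : ℕ, Even j → Even (Multiset.count j M)) :
    (M.filter (fun j => Odd j)).card + 6*n ≤ Smin M + 4*(M.sup/2) ∧
    ((M.filter (fun j => Odd j)).card + 6*n = Smin M + 4*(M.sup/2) ↔
      (Multiset.card M = 1 ∨ (Multiset.card M = 3 ∧ (∀ j ∈ M, Odd j) ∧ 1 ∈ M))) := by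
  have hM0 : M ≠ 0 := by
    intro h; rw [h] at hsum; simp at hsum
  rcases hr : Multiset.card M with _ | _ | _ | _ | r
  · simp [Multiset.card_eq_zero] at hr; exact absurd hr hM0
  · -- card = 1
    obtain ⟨a, rfl⟩ := Multiset.card_eq_one.mp hr
    simp only [Multiset.sum_singleton] at hsum
    subst hsum
    have hodd : Odd (2*n+1) := ⟨n, by ring⟩
    have hf : (Multiset.filter (fun j => Odd j) {2*n+1}) = {2*n+1} := by
      rw [Multiset.filter_eq_self]; intro b hb; rw [Multiset.mem_singleton] at hb; subst hb; exact hodd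
    have hS : Smin {2*n+1} = 2*n+1 := by simp [Smin]
    have hsup : Multiset.sup {2*n+1} = 2*n+1 := by simp
    rw [hf, hS, hsup]
    constructor
    · simp; omega
    · simp; omega
  · -- card = 2 : contradiction
    exfalso
    obtain ⟨a, b, rfl⟩ := Multiset.card_eq_two.mp hr
    have hsum2 : a + b = 2*n+1 := by simpa using hsum
    rcases eq_or_ne a b with rfl | hne
    · omega
    rcases Nat.even_or_odd a with ha | ha
    · have h := horth a ha
      rw [show ({a, b} : Multiset ℕ) = a ::ₘ {b} from rfl, Multiset.count_cons_self,
        Multiset.count_singleton] at h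
      simp [hne, Nat.even_iff] at h
    · have hb : Even b := by
        rcases Nat.even_or_odd b with hb | hb
        · exact hb
        · exfalso; rw [Nat.odd_iff] at ha hb; omega
      have h := horth b hb
      rw [show ({a, b} : Multiset ℕ) = a ::ₘ {b} from rfl, Multiset.count_cons,
        Multiset.count_singleton] at h
      simp [Ne.symm hne, Nat.even_iff] at h
  · -- card = 3
    obtain ⟨a, b, c, rfl⟩ := Multiset.card_eq_three.mp hr
    have hsum3 : a + b + c = 2*n+1 := by
      have := hsum; simp [Multiset.sum_cons] at this; omega
    have ha1 : 1 ≤ a := hpos a (by simp)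
    have hb1 : 1 ≤ b := hpos b (by simp)
    have hc1 : 1 ≤ c := hpos c (by simp)
    have hS : Smin {a, b, c} = a + b + c + 2*(min a b + min a c + min b c) := by
      rw [show ({a, b, c} : Multiset ℕ) = a ::ₘ b ::ₘ c ::ₘ 0 from rfl,
        Smin_cons, Smin_cons, Smin_cons]
      simp [Smin, min_comm]
      ring
    have hsup : Multiset.sup {a, b, c} = max a (max b c) := by
      simp [Multiset.sup_cons]
    have hcardf : (Multiset.filter (fun j => Odd j) {a, b, c}).card
        = (if Odd a then 1 else 0) + (if Odd b then 1 else 0) + (if Odd c then 1 else 0) := by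
      rw [card_filter_eq_sum]
      simp [Multiset.sum_cons]
      omega
    have hmem : ((1:ℕ) ∈ ({a, b, c} : Multiset ℕ)) ↔ (1 = a ∨ 1 = b ∨ 1 = c) := by
      simp
    have hall : (∀ j ∈ ({a, b, c} : Multiset ℕ), Odd j) ↔ (Odd a ∧ Odd b ∧ Odd c) := by
      constructor
      · intro h; exact ⟨h a (by simp), h b (by simp), h c (by simp)⟩
      · rintro ⟨h1, h2, h3⟩ j hj
        simp at hj
        rcases hj with rfl | rfl | rfl <;> assumption
    have hite : ∀ x : ℕ, (if Odd x then 1 else 0) = x % 2 := by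
      intro x
      by_cases h : Odd x
      · rw [if_pos h]; rw [Nat.odd_iff] at h; omega
      · rw [if_neg h]; rw [Nat.odd_iff] at h
        simp at h; omega
    have hall' : (∀ j ∈ ({a, b, c} : Multiset ℕ), Odd j) ↔
        (a % 2 = 1 ∧ b % 2 = 1 ∧ c % 2 = 1) := by
      rw [hall, Nat.odd_iff, Nat.odd_iff, Nat.odd_iff]
    rw [hS]
    rw [hsup]
    rw [hcardf]
    rw [hite a, hite b, hite c]
    rw [hall', hmem]
    have hm1 : a ⊓ b = a ∨ a ⊓ b = b := by
      rcases le_total a b with h | h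
      · exact Or.inl (inf_eq_left.mpr h)
      · exact Or.inr (inf_eq_right.mpr h)
    have hm2 : a ⊓ c = a ∨ a ⊓ c = c := by
      rcases le_total a c with h | h
      · exact Or.inl (inf_eq_left.mpr h)
      · exact Or.inr (inf_eq_right.mpr h)
    have hm3 : b ⊓ c = b ∨ b ⊓ c = c := by
      rcases le_total b c with h | h
      · exact Or.inl (inf_eq_left.mpr h)
      · exact Or.inr (inf_eq_right.mpr h)
    have hm1a : a ⊓ b ≤ a := inf_le_left
    have hm1b : a ⊓ b ≤ b := inf_le_right
    have hm2a : a ⊓ c ≤ a := inf_le_left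
    have hm2c : a ⊓ c ≤ c := inf_le_right
    have hm3b : b ⊓ c ≤ b := inf_le_left
    have hm3c : b ⊓ c ≤ c := inf_le_right
    have ht : a ⊔ (b ⊔ c) = a ∨ a ⊔ (b ⊔ c) = b ∨ a ⊔ (b ⊔ c) = c := by
      rcases le_total a (b ⊔ c) with h | h
      · rw [sup_eq_right.mpr h]
        rcases le_total b c with h' | h'
        · exact Or.inr (Or.inr (sup_eq_right.mpr h'))
        · exact Or.inr (Or.inl (sup_eq_left.mpr h'))
      · exact Or.inl (sup_eq_left.mpr h)
    have hta : a ≤ a ⊔ (b ⊔ c) := le_sup_left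
    have htb : b ≤ a ⊔ (b ⊔ c) := le_trans le_sup_left le_sup_right
    have htc : c ≤ a ⊔ (b ⊔ c) := le_trans le_sup_right le_sup_right
    set m1 := a ⊓ b with hdm1
    set m2 := a ⊓ c with hdm2
    set m3 := b ⊓ c with hdm3
    set t := a ⊔ (b ⊔ c) with hdt
    clear_value m1 m2 m3 t
    clear hS hsup hcardf hsum hpos horth hM0 hr hall hmem hall' hite hdm1 hdm2 hdm3 hdt
    rcases Nat.mod_two_eq_zero_or_one a with h1 | h1 <;>
      rcases Nat.mod_two_eq_zero_or_one b with h2 | h2 <;>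
      rcases Nat.mod_two_eq_zero_or_one c with h3 | h3 <;>
      simp only [h1, h2, h3, true_and, and_true] <;> omega
  · -- card ≥ 4
    have h4 : 4 ≤ Multiset.card M := by omega
    have hsupmem : M.sup ∈ M := sup_mem hM0
    set s := M.sup with hs
    set M' := M.erase s with hM'
    have hMeq : M = s ::ₘ M' := (Multiset.cons_erase hsupmem).symm
    have hpos' : ∀ x ∈ M', 1 ≤ x := fun x hx => hpos x (Multiset.mem_of_mem_erase hx)
    have hle : ∀ x ∈ M', x ≤ s := fun x hx => Multiset.le_sup (Multiset.mem_of_mem_erase hx)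
    have hmin : (M'.map (fun x => min s x)).sum = M'.sum := by
      have : M'.map (fun x => min s x) = M'.map id := by
        apply Multiset.map_congr rfl
        intro x hx
        exact min_eq_right (hle x hx)
      rw [this, Multiset.map_id]
    have hSrec : Smin M = s + 2 * M'.sum + Smin M' := by
      conv_lhs => rw [hMeq]
      rw [Smin_cons, hmin]
    have hsum' : s + M'.sum = 2*n+1 := by
      rw [← hsum]; conv_rhs => rw [hMeq]
      rw [Multiset.sum_cons]
    have hcard' : Multiset.card M' + 1 = Multiset.card M := by
      conv_rhs => rw [hMeq]
      rw [Multiset.card_cons]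
    have hSge := Smin_ge M' hpos'
    have ho : (M.filter (fun j => Odd j)).card ≤ Multiset.card M :=
      Multiset.card_le_card (Multiset.filter_le _ _)
    have hc3 : 3 ≤ Multiset.card M' := by omega
    have hnl : 3 * Multiset.card M' ≤ Multiset.card M' * Multiset.card M' :=
      Nat.mul_le_mul_right _ hc3
    have hssum : s ≤ 2*n+1 := by omega
    constructor
    · omega
    · constructor
      · intro h; exfalso; omega
      · rintro (h | ⟨h, _⟩) <;> omega
end SoOdd

/-- the case `g = so_{2n+1}`. Let `n ≥ 1` and let `η` be an
orthogonal partition of `2n+1` (every even part occurs with even multiplicity), with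
dual partition `η̂ = (η̂₁,…,η̂_s)`, `s = η₁`. Then
`(1/2)(Σ η̂ᵢ² − o(η)) + 2⌊s/2⌋ − 3n ≥ 0`, with equality iff either `η = (2n+1)` has a
single part, or `η` has exactly three parts, all odd, the smallest being `1`. -/
theorem so_odd_inequality (n : ℕ) (hn : 1 ≤ n) (η : Nat.Partition (2 * n + 1))
    (horth : ∀ j : ℕ, Even j → Even (Multiset.count j η.parts)) :
    (0 ≤ (1 / 2 : ℚ) * ((∑ i ∈ Finset.Icc 1 η.parts.sup, (dualPart η i : ℚ) ^ 2)
          - (oddCount η : ℚ))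
        + 2 * ((η.parts.sup / 2 : ℕ) : ℚ) - 3 * (n : ℚ)) ∧
    ((1 / 2 : ℚ) * ((∑ i ∈ Finset.Icc 1 η.parts.sup, (dualPart η i : ℚ) ^ 2)
          - (oddCount η : ℚ))
        + 2 * ((η.parts.sup / 2 : ℕ) : ℚ) - 3 * (n : ℚ) = 0 ↔
      (Multiset.card η.parts = 1 ∨
        (Multiset.card η.parts = 3 ∧ (∀ j ∈ η.parts, Odd j) ∧ 1 ∈ η.parts))) := by
  have hpos : ∀ x ∈ η.parts, 1 ≤ x := fun x hx => η.parts_pos hx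
  have hsum : η.parts.sum = 2*n+1 := η.parts_sum
  obtain ⟨hle, hiff⟩ := SoOdd.key n hn η.parts hpos hsum horth
  have hsq : (∑ i ∈ Finset.Icc 1 η.parts.sup, (dualPart η i : ℚ) ^ 2)
      = ((SoOdd.Smin η.parts : ℕ) : ℚ) := by
    rw [← SoOdd.sum_sq_dual η.parts]
    push_cast
    rfl
  have ho : (oddCount η : ℚ) = ((η.parts.filter (fun j => Odd j)).card : ℚ) := rfl
  set S := SoOdd.Smin η.parts with hS
  set o := (η.parts.filter (fun j => Odd j)).card with hoo
  set d := η.parts.sup / 2 with hd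
  have hexp : (1 / 2 : ℚ) * ((∑ i ∈ Finset.Icc 1 η.parts.sup, (dualPart η i : ℚ) ^ 2)
          - (oddCount η : ℚ)) + 2 * ((d : ℕ) : ℚ) - 3 * (n : ℚ)
      = (((S + 4*d : ℕ) : ℚ) - ((o + 6*n : ℕ) : ℚ)) / 2 := by
    rw [hsq, ho]
    push_cast
    ring
  constructor
  · rw [hexp]
    have : ((o + 6*n : ℕ) : ℚ) ≤ ((S + 4*d : ℕ) : ℚ) := by exact_mod_cast hle
    linarith
  · rw [hexp]
    constructor
    · intro h
      rcases div_eq_zero_iff.mp h with h | h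
      · exact hiff.mp (by exact_mod_cast (sub_eq_zero.mp h).symm)
      · norm_num at h
    · intro h
      have heq : ((S + 4*d : ℕ) : ℚ) = ((o + 6*n : ℕ) : ℚ) := by
        exact_mod_cast (hiff.mpr h).symm
      rw [heq, sub_self, zero_div]
end
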